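/- Combining the gluing lemma with the Kochen-Specker theorem: for dim(H) ≥ 3 there is no family of local valuations {vᵢ} on all contexts of H satisfying the compatibility condition such that each vᵢ obeys the Value-Rule and FUNC on its context. -/

import Mathlib

open Polynomial

/-- A context: a set of pairwise commuting self-adjoint bounded operators. -/
def IsContext {H : Type*} [NormedAddCommGroup H] [InnerProductSpace ℂ H]
    [CompleteSpace H] (C : Set (H →L[ℂ] H)) : Prop :=
  (∀ A ∈ C, IsSelfAdjoint A) ∧ (∀ A ∈ C, ∀ B ∈ C, Commute A B)

set_option maxHeartbeats 4000000
set_option synthInstance.maxHeartbeats 1000000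

noncomputable section KSsetup

abbrev EKS := EuclideanSpace ℂ (Fin 3)

def rk1 (u : EKS) : EKS →L[ℂ] EKS := (innerSL ℂ u).smulRight u

def proj (u : EKS) : EKS →L[ℂ] EKS := ((inner ℂ u u : ℂ))⁻¹ • rk1 u

lemma proj_apply (u x : EKS) : proj u x = ((inner ℂ u u : ℂ))⁻¹ • ((inner ℂ u x : ℂ) • u) := rfl

lemma proj_mul_proj (u w : EKS) (h : (inner ℂ u w : ℂ) = 0) : proj u * proj w = 0 := by
  refine ContinuousLinearMap.ext fun x => ?_
  simp only [ContinuousLinearMap.mul_apply, proj_apply, inner_smul_right, h,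
    ContinuousLinearMap.zero_apply, smul_smul, mul_zero, zero_mul, zero_smul, smul_zero]

lemma proj_idem (u : EKS) (h : (inner ℂ u u : ℂ) ≠ 0) : proj u * proj u = proj u := by
  refine ContinuousLinearMap.ext fun x => ?_
  simp only [ContinuousLinearMap.mul_apply, proj_apply, inner_smul_right, smul_smul]
  congr 1
  set a := (inner ℂ u u : ℂ) with ha
  set b := (inner ℂ u x : ℂ) with hb
  field_simp

lemma proj_apply_self (u : EKS) (h : (inner ℂ u u : ℂ) ≠ 0) : proj u u = u := by
  rw [proj_apply, smul_smul, inv_mul_cancel₀ h, one_smul]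

lemma proj_apply_orth (u w : EKS) (h : (inner ℂ u w : ℂ) = 0) : proj u w = 0 := by
  rw [proj_apply, h, zero_smul, smul_zero]

lemma proj_sa (u : EKS) : IsSelfAdjoint (proj u) := by
  have hsym : (proj u : EKS →ₗ[ℂ] EKS).IsSymmetric := by
    intro x y
    simp only [ContinuousLinearMap.coe_coe, proj_apply]
    rw [inner_smul_left, inner_smul_left, inner_smul_right, inner_smul_right,
      inner_conj_symm, map_inv₀, inner_conj_symm]
    ring
  exact hsym.isSelfAdjoint

lemma inner_conj_zero (u w : EKS) (h : (inner ℂ u w : ℂ) = 0) : (inner ℂ w u : ℂ) = 0 := by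
  rw [← inner_conj_symm, h, map_zero]

lemma sum_proj (u w x : EKS)
    (huw : (inner ℂ u w : ℂ) = 0) (hux : (inner ℂ u x : ℂ) = 0) (hwx : (inner ℂ w x : ℂ) = 0)
    (hu : (inner ℂ u u : ℂ) ≠ 0) (hw : (inner ℂ w w : ℂ) ≠ 0) (hx : (inner ℂ x x : ℂ) ≠ 0) :
    proj u + proj w + proj x = 1 := by
  have hwu := inner_conj_zero u w huw
  have hxu := inner_conj_zero u x hux
  have hxw := inner_conj_zero w x hwx
  have hli : LinearIndependent ℂ ![u, w, x] := by
    rw [Fintype.linearIndependent_iff]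
    intro g hg
    have h0 : g 0 • u + g 1 • w + g 2 • x = 0 := by
      have := hg
      simpa [Fin.sum_univ_three] using this
    have e : ∀ (y : EKS), (inner ℂ y (g 0 • u + g 1 • w + g 2 • x) : ℂ) = 0 := by
      intro y; rw [h0, inner_zero_right]
    have eu := e u
    rw [inner_add_right, inner_add_right, inner_smul_right, inner_smul_right,
      inner_smul_right, huw, hux] at eu
    have gu : g 0 = 0 := by
      simp only [mul_zero, add_zero] at eu
      rcases mul_eq_zero.mp eu with h | h
      · exact h
      · exact absurd h hu
    have ew := e w
    rw [inner_add_right, inner_add_right, inner_smul_right, inner_smul_right,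
      inner_smul_right, hwu, hwx] at ew
    have gw : g 1 = 0 := by
      simp only [mul_zero, add_zero, zero_add] at ew
      rcases mul_eq_zero.mp ew with h | h
      · exact h
      · exact absurd h hw
    have ex := e x
    rw [inner_add_right, inner_add_right, inner_smul_right, inner_smul_right,
      inner_smul_right, hxu, hxw] at ex
    have gx : g 2 = 0 := by
      simp only [mul_zero, add_zero, zero_add] at ex
      rcases mul_eq_zero.mp ex with h | h
      · exact h
      · exact absurd h hx
    intro i; fin_cases i <;> assumption
  have hcard : Fintype.card (Fin 3) = Module.finrank ℂ EKS := by
    simp [finrank_euclideanSpace_fin]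
  have hsp : Submodule.span ℂ (Set.range ![u, w, x]) = ⊤ :=
    hli.span_eq_top_of_card_eq_finrank hcard
  refine ContinuousLinearMap.ext fun y => ?_
  have hy : y ∈ Submodule.span ℂ (Set.range ![u, w, x]) := by rw [hsp]; trivial
  induction hy using Submodule.span_induction with
  | mem z hz =>
      simp only [Set.range, Matrix.cons_val_zero, Matrix.cons_val_one, Matrix.head_cons] at hz
      obtain ⟨i, rfl⟩ := hz
      fin_cases i
      · simp [ContinuousLinearMap.add_apply, proj_apply_orth, hwu, hxu,
          proj_apply_self u hu]
      · simp [ContinuousLinearMap.add_apply, proj_apply_orth, huw, hxw,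
          proj_apply_self w hw]
      · simp [ContinuousLinearMap.add_apply, proj_apply_orth, hux, hwx,
          proj_apply_self x hx]
  | zero => simp
  | add a b _ _ ha hb => simp only [map_add, ha, hb]
  | smul c a _ ha => simp only [map_smul, ha]

lemma csmul_zero (c : ℂ) : c • (0 : EKS →L[ℂ] EKS) = 0 := by
  refine ContinuousLinearMap.ext fun x => ?_
  simp [ContinuousLinearMap.smul_apply]

lemma csmul_mul (c : ℂ) (S T : EKS →L[ℂ] EKS) : (c • S) * T = c • (S * T) := by
  refine ContinuousLinearMap.ext fun x => ?_
  simp [ContinuousLinearMap.smul_apply, ContinuousLinearMap.mul_apply]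

lemma mul_csmul (c : ℂ) (S T : EKS →L[ℂ] EKS) : S * (c • T) = c • (S * T) := by
  refine ContinuousLinearMap.ext fun x => ?_
  simp [ContinuousLinearMap.smul_apply, ContinuousLinearMap.mul_apply]

lemma csmul_csmul (c d : ℂ) (T : EKS →L[ℂ] EKS) : c • (d • T) = (c*d) • T := by
  refine ContinuousLinearMap.ext fun x => ?_
  simp [ContinuousLinearMap.smul_apply, smul_smul]

lemma smul_sa (r : ℝ) (T : EKS →L[ℂ] EKS) (h : IsSelfAdjoint T) :
    IsSelfAdjoint ((r:ℂ) • T) := by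
  rw [ContinuousLinearMap.isSelfAdjoint_iff_isSymmetric] at h ⊢
  intro x y
  simp only [ContinuousLinearMap.coe_smul, LinearMap.smul_apply, ContinuousLinearMap.coe_coe,
    inner_smul_left, inner_smul_right, Complex.conj_ofReal]
  exact congrArg (fun z => (r:ℂ) * z) (h x y)


lemma KS_key (v : Set (EKS →L[ℂ] EKS) → (EKS →L[ℂ] EKS) → ℝ)
    (h1 : ∀ C, IsContext C → ∀ A ∈ C,
        ((v C A : ℂ) ∈ spectrum ℂ A ∧
         ∀ p : Polynomial ℝ, aeval A (p.map (algebraMap ℝ ℂ)) ∈ C →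
           v C (aeval A (p.map (algebraMap ℝ ℂ))) = p.eval (v C A)))
    (h2 : ∀ C D, IsContext C → IsContext D → ∀ A, A ∈ C → A ∈ D → v C A = v D A)
    (u w x : EKS)
    (huw : (inner ℂ u w : ℂ) = 0) (hux : (inner ℂ u x : ℂ) = 0) (hwx : (inner ℂ w x : ℂ) = 0)
    (hu : (inner ℂ u u : ℂ) ≠ 0) (hw : (inner ℂ w w : ℂ) ≠ 0) (hx : (inner ℂ x x : ℂ) ≠ 0) :
    (v {proj u} (proj u) = 1 ∧ v {proj w} (proj w) = 0 ∧ v {proj x} (proj x) = 0) ∨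
    (v {proj u} (proj u) = 0 ∧ v {proj w} (proj w) = 1 ∧ v {proj x} (proj x) = 0) ∨
    (v {proj u} (proj u) = 0 ∧ v {proj w} (proj w) = 0 ∧ v {proj x} (proj x) = 1) := by
  have hwu := inner_conj_zero u w huw
  have hxu := inner_conj_zero u x hux
  have hxw := inner_conj_zero w x hwx
  set P := proj u with hPdef
  set Q := proj w with hQdef
  set R := proj x with hRdef
  have hPP : P * P = P := proj_idem u hu
  have hQQ : Q * Q = Q := proj_idem w hw
  have hRR : R * R = R := proj_idem x hx
  have hPQ : P * Q = 0 := proj_mul_proj u w huw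
  have hQP : Q * P = 0 := proj_mul_proj w u hwu
  have hPR : P * R = 0 := proj_mul_proj u x hux
  have hRP : R * P = 0 := proj_mul_proj x u hxu
  have hQR : Q * R = 0 := proj_mul_proj w x hwx
  have hRQ : R * Q = 0 := proj_mul_proj x w hxw
  have hone : P + Q + R = 1 := sum_proj u w x huw hux hwx hu hw hx
  set A : EKS →L[ℂ] EKS := P + ((2:ℝ):ℂ) • Q + ((3:ℝ):ℂ) • R with hAdef
  have hPA : P * A = P := by
    rw [hAdef]
    simp only [mul_add, mul_csmul, hPP, hPQ, hPR, csmul_zero, add_zero]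
  have hAP : A * P = P := by
    rw [hAdef]
    simp only [add_mul, csmul_mul, hPP, hQP, hRP, csmul_zero, add_zero]
  have hQA : Q * A = ((2:ℝ):ℂ) • Q := by
    rw [hAdef]
    simp only [mul_add, mul_csmul, hQP, hQQ, hQR, csmul_zero, add_zero, zero_add]
  have hAQ : A * Q = ((2:ℝ):ℂ) • Q := by
    rw [hAdef]
    simp only [add_mul, csmul_mul, hPQ, hQQ, hRQ, csmul_zero, add_zero, zero_add]
  have hRA : R * A = ((3:ℝ):ℂ) • R := by
    rw [hAdef]
    simp only [mul_add, mul_csmul, hRP, hRQ, hRR, csmul_zero, add_zero, zero_add]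
  have hAR : A * R = ((3:ℝ):ℂ) • R := by
    rw [hAdef]
    simp only [add_mul, csmul_mul, hPR, hQR, hRR, csmul_zero, add_zero, zero_add]
  have hA2 : A * A = P + ((4:ℝ):ℂ) • Q + ((9:ℝ):ℂ) • R := by
    nth_rewrite 1 [hAdef]
    rw [add_mul, add_mul, csmul_mul, csmul_mul, hPA, hQA, hRA, csmul_csmul, csmul_csmul]
    norm_num
  have hA3 : A * (A * A) = P + ((8:ℝ):ℂ) • Q + ((27:ℝ):ℂ) • R := by
    rw [hA2, mul_add, mul_add, mul_csmul, mul_csmul, hAP, hAQ, hAR, csmul_csmul, csmul_csmul]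
    norm_num
  have hsaP : IsSelfAdjoint P := proj_sa u
  have hsaQ : IsSelfAdjoint Q := proj_sa w
  have hsaR : IsSelfAdjoint R := proj_sa x
  have hsaA : IsSelfAdjoint A := by
    rw [hAdef]
    exact IsSelfAdjoint.add (R := EKS →L[ℂ] EKS) (IsSelfAdjoint.add (R := EKS →L[ℂ] EKS) hsaP (smul_sa 2 Q hsaQ)) (smul_sa 3 R hsaR)
  set C : Set (EKS →L[ℂ] EKS) := {A, P, Q, R} with hCdef
  have hAC : A ∈ C := Set.mem_insert _ _
  have hPC : P ∈ C := by right; left; rfl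
  have hQC : Q ∈ C := by right; right; left; rfl
  have hRC : R ∈ C := by right; right; right; rfl
  have cAP : Commute A P := by unfold Commute SemiconjBy; rw [hAP, hPA]
  have cAQ : Commute A Q := by unfold Commute SemiconjBy; rw [hAQ, hQA]
  have cAR : Commute A R := by unfold Commute SemiconjBy; rw [hAR, hRA]
  have cPQ : Commute P Q := by unfold Commute SemiconjBy; rw [hPQ, hQP]
  have cPR : Commute P R := by unfold Commute SemiconjBy; rw [hPR, hRP]
  have cQR : Commute Q R := by unfold Commute SemiconjBy; rw [hQR, hRQ]
  have hC : IsContext C := by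
    constructor
    · intro B hB
      rcases hB with h | h | h | h <;> subst h <;> assumption
    · intro B hB B' hB'
      rcases hB with h | h | h | h <;> rcases hB' with h' | h' | h' | h' <;> subst h <;> subst h'
      exacts [Commute.refl _, cAP, cAQ, cAR, cAP.symm, Commute.refl _, cPQ, cPR,
        cAQ.symm, cPQ.symm, Commute.refl _, cQR, cAR.symm, cPR.symm, cQR.symm, Commute.refl _]
  have haev1 : aeval A ((Polynomial.C (3:ℝ) - Polynomial.C (5/2) * X
      + Polynomial.C (1/2) * X^2).map (algebraMap ℝ ℂ)) = P := by
    simp only [Polynomial.map_add, Polynomial.map_sub, Polynomial.map_mul, Polynomial.map_pow,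
      Polynomial.map_C, Polynomial.map_X, map_add, map_sub, map_mul, map_pow, aeval_X, aeval_C,
      Complex.coe_algebraMap]
    rw [← Algebra.smul_def, ← Algebra.smul_def,
      show (algebraMap ℂ (EKS →L[ℂ] EKS)) ((3:ℝ):ℂ) = ((3:ℝ):ℂ) • 1 from
        Algebra.algebraMap_eq_smul_one _,
      pow_two, hA2, hAdef, ← hone]
    refine ContinuousLinearMap.ext fun y => ?_
    simp only [ContinuousLinearMap.add_apply, ContinuousLinearMap.sub_apply,
      ContinuousLinearMap.smul_apply, ContinuousLinearMap.coe_smul, LinearMap.smul_apply,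
      ContinuousLinearMap.coe_coe, ContinuousLinearMap.one_apply]
    match_scalars <;> push_cast <;> ring
  have haev2 : aeval A ((Polynomial.C (-3:ℝ) + Polynomial.C 4 * X
      - Polynomial.C 1 * X^2).map (algebraMap ℝ ℂ)) = Q := by
    simp only [Polynomial.map_add, Polynomial.map_sub, Polynomial.map_mul, Polynomial.map_pow,
      Polynomial.map_C, Polynomial.map_X, map_add, map_sub, map_mul, map_pow, aeval_X, aeval_C,
      Complex.coe_algebraMap]
    rw [← Algebra.smul_def, ← Algebra.smul_def,
      show (algebraMap ℂ (EKS →L[ℂ] EKS)) ((-3:ℝ):ℂ) = ((-3:ℝ):ℂ) • 1 from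
        Algebra.algebraMap_eq_smul_one _,
      pow_two, hA2, hAdef, ← hone]
    refine ContinuousLinearMap.ext fun y => ?_
    simp only [ContinuousLinearMap.add_apply, ContinuousLinearMap.sub_apply,
      ContinuousLinearMap.smul_apply, ContinuousLinearMap.coe_smul, LinearMap.smul_apply,
      ContinuousLinearMap.coe_coe, ContinuousLinearMap.one_apply]
    match_scalars <;> push_cast <;> ring
  have haev3 : aeval A ((Polynomial.C (1:ℝ) - Polynomial.C (3/2) * X
      + Polynomial.C (1/2) * X^2).map (algebraMap ℝ ℂ)) = R := by
    simp only [Polynomial.map_add, Polynomial.map_sub, Polynomial.map_mul, Polynomial.map_pow,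
      Polynomial.map_C, Polynomial.map_X, map_add, map_sub, map_mul, map_pow, aeval_X, aeval_C,
      Complex.coe_algebraMap]
    rw [← Algebra.smul_def, ← Algebra.smul_def,
      show (algebraMap ℂ (EKS →L[ℂ] EKS)) ((1:ℝ):ℂ) = ((1:ℝ):ℂ) • 1 from
        Algebra.algebraMap_eq_smul_one _,
      pow_two, hA2, hAdef, ← hone]
    refine ContinuousLinearMap.ext fun y => ?_
    simp only [ContinuousLinearMap.add_apply, ContinuousLinearMap.sub_apply,
      ContinuousLinearMap.smul_apply, ContinuousLinearMap.coe_smul, LinearMap.smul_apply,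
      ContinuousLinearMap.coe_coe, ContinuousLinearMap.one_apply]
    match_scalars <;> push_cast <;> ring
  have haevq : aeval A ((Polynomial.C (-6:ℝ) + Polynomial.C 11 * X
      - Polynomial.C 6 * X^2 + X^3).map (algebraMap ℝ ℂ)) = 0 := by
    simp only [Polynomial.map_add, Polynomial.map_sub, Polynomial.map_mul, Polynomial.map_pow,
      Polynomial.map_C, Polynomial.map_X, map_add, map_sub, map_mul, map_pow, aeval_X, aeval_C,
      Complex.coe_algebraMap]
    rw [← Algebra.smul_def, ← Algebra.smul_def,
      show (algebraMap ℂ (EKS →L[ℂ] EKS)) ((-6:ℝ):ℂ) = ((-6:ℝ):ℂ) • 1 from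
        Algebra.algebraMap_eq_smul_one _,
      pow_two, show A^3 = A * (A * A) from by rw [pow_succ, pow_two, mul_assoc],
      hA3, hA2, hAdef, ← hone]
    refine ContinuousLinearMap.ext fun y => ?_
    simp only [ContinuousLinearMap.add_apply, ContinuousLinearMap.sub_apply,
      ContinuousLinearMap.smul_apply, ContinuousLinearMap.coe_smul, LinearMap.smul_apply,
      ContinuousLinearMap.coe_coe, ContinuousLinearMap.one_apply,
      ContinuousLinearMap.zero_apply]
    match_scalars <;> push_cast <;> ring
  obtain ⟨hspec, hfunc⟩ := h1 C hC A hAC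
  set t : ℝ := v C A with htdef
  have ht : t = 1 ∨ t = 2 ∨ t = 3 := by
    have hmap := spectrum.subset_polynomial_aeval A
      ((Polynomial.C (-6:ℝ) + Polynomial.C 11 * X - Polynomial.C 6 * X^2 + X^3).map
        (algebraMap ℝ ℂ)) ⟨(t:ℂ), hspec, rfl⟩
    rw [haevq, spectrum.zero_eq] at hmap
    have hev : eval (t:ℂ) ((Polynomial.C (-6:ℝ) + Polynomial.C 11 * X
        - Polynomial.C 6 * X^2 + X^3).map (algebraMap ℝ ℂ)) = 0 := hmap
    simp only [Polynomial.map_add, Polynomial.map_sub, Polynomial.map_mul, Polynomial.map_pow,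
      Polynomial.map_C, Polynomial.map_X, eval_add, eval_sub, eval_mul, eval_pow, eval_C, eval_X,
      Complex.coe_algebraMap] at hev
    have hfac : ((t:ℂ) - 1) * ((t:ℂ) - 2) * ((t:ℂ) - 3) = 0 := by
      rw [← hev]; push_cast; ring
    rcases mul_eq_zero.mp hfac with h' | h'
    · rcases mul_eq_zero.mp h' with h'' | h''
      · left
        have h3 : (t:ℂ) = ((1:ℝ):ℂ) := by rw [sub_eq_zero] at h''; exact_mod_cast h''
        exact_mod_cast h3
      · right; left
        have h3 : (t:ℂ) = ((2:ℝ):ℂ) := by rw [sub_eq_zero] at h''; exact_mod_cast h''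
        exact_mod_cast h3
    · right; right
      have h3 : (t:ℂ) = ((3:ℝ):ℂ) := by rw [sub_eq_zero] at h'; exact_mod_cast h'
      exact_mod_cast h3
  have hvP : v C P = (Polynomial.C (3:ℝ) - Polynomial.C (5/2) * X
      + Polynomial.C (1/2) * X^2).eval t := by
    have h' := hfunc _ (by rw [haev1]; exact hPC)
    rwa [haev1] at h'
  have hvQ : v C Q = (Polynomial.C (-3:ℝ) + Polynomial.C 4 * X
      - Polynomial.C 1 * X^2).eval t := by
    have h' := hfunc _ (by rw [haev2]; exact hQC)
    rwa [haev2] at h'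
  have hvR : v C R = (Polynomial.C (1:ℝ) - Polynomial.C (3/2) * X
      + Polynomial.C (1/2) * X^2).eval t := by
    have h' := hfunc _ (by rw [haev3]; exact hRC)
    rwa [haev3] at h'
  have singCtx : ∀ B : EKS →L[ℂ] EKS, IsSelfAdjoint B → IsContext {B} := by
    intro B hB
    exact ⟨fun A' hA' => by rw [Set.mem_singleton_iff] at hA'; rwa [hA'],
      fun A' hA' B' hB' => by
        rw [Set.mem_singleton_iff] at hA' hB'; rw [hA', hB']⟩
  have hcmpP : v C P = v {P} P := h2 C {P} hC (singCtx P hsaP) P hPC rfl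
  have hcmpQ : v C Q = v {Q} Q := h2 C {Q} hC (singCtx Q hsaQ) Q hQC rfl
  have hcmpR : v C R = v {R} R := h2 C {R} hC (singCtx R hsaR) R hRC rfl
  rcases ht with h | h | h
  · left
    refine ⟨?_, ?_, ?_⟩
    · rw [← hcmpP, hvP, h]; simp; norm_num
    · rw [← hcmpQ, hvQ, h]; simp; norm_num
    · rw [← hcmpR, hvR, h]; simp; norm_num
  · right; left
    refine ⟨?_, ?_, ?_⟩
    · rw [← hcmpP, hvP, h]; simp; norm_num
    · rw [← hcmpQ, hvQ, h]; simp; norm_num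
    · rw [← hcmpR, hvR, h]; simp; norm_num
  · right; right
    refine ⟨?_, ?_, ?_⟩
    · rw [← hcmpP, hvP, h]; simp; norm_num
    · rw [← hcmpQ, hvQ, h]; simp; norm_num
    · rw [← hcmpR, hvR, h]; simp; norm_num


def s2 : ℂ := ((Real.sqrt 2 : ℝ) : ℂ)
lemma s2_mul_s2 : s2 * s2 = 2 := by
  rw [s2, ← Complex.ofReal_mul, Real.mul_self_sqrt (by norm_num)]
  norm_num
lemma s2_conj : (starRingEnd ℂ) s2 = s2 := Complex.conj_ofReal _
def mkE (a b c : ℂ) : EKS := (WithLp.equiv 2 (Fin 3 → ℂ)).symm ![a, b, c]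
lemma inner_mkE (a b c a' b' c' : ℂ) :
    (inner ℂ (mkE a b c) (mkE a' b' c') : ℂ) =
      (starRingEnd ℂ) a * a' + (starRingEnd ℂ) b * b' + (starRingEnd ℂ) c * c' := by
  simp [mkE, PiLp.inner_apply, RCLike.inner_apply, Fin.sum_univ_three]
  ring

def u0 : EKS := mkE (0:ℂ) (0:ℂ) (1:ℂ)
def u1 : EKS := mkE (0:ℂ) s2 ((-1):ℂ)
def u2 : EKS := mkE (0:ℂ) s2 (1:ℂ)
def u3 : EKS := mkE (0:ℂ) (1:ℂ) ((-1):ℂ)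
def u4 : EKS := mkE (0:ℂ) (1:ℂ) (-s2)
def u5 : EKS := mkE (0:ℂ) (1:ℂ) (0:ℂ)
def u6 : EKS := mkE (0:ℂ) (1:ℂ) s2
def u7 : EKS := mkE (0:ℂ) (1:ℂ) (1:ℂ)
def u8 : EKS := mkE s2 ((-1):ℂ) ((-1):ℂ)
def u9 : EKS := mkE s2 ((-1):ℂ) (0:ℂ)
def u10 : EKS := mkE s2 ((-1):ℂ) (1:ℂ)
def u11 : EKS := mkE s2 (0:ℂ) ((-1):ℂ)
def u12 : EKS := mkE s2 (0:ℂ) (1:ℂ)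
def u13 : EKS := mkE s2 (1:ℂ) ((-1):ℂ)
def u14 : EKS := mkE s2 (1:ℂ) (0:ℂ)
def u15 : EKS := mkE s2 (1:ℂ) (1:ℂ)
def u16 : EKS := mkE (1:ℂ) ((-1):ℂ) (-s2)
def u17 : EKS := mkE (1:ℂ) ((-1):ℂ) (0:ℂ)
def u18 : EKS := mkE (1:ℂ) ((-1):ℂ) s2
def u19 : EKS := mkE (1:ℂ) (-s2) ((-1):ℂ)
def u20 : EKS := mkE (1:ℂ) (-s2) (0:ℂ)
def u21 : EKS := mkE (1:ℂ) (-s2) (1:ℂ)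
def u22 : EKS := mkE (1:ℂ) (0:ℂ) ((-1):ℂ)
def u23 : EKS := mkE (1:ℂ) (0:ℂ) (-s2)
def u24 : EKS := mkE (1:ℂ) (0:ℂ) (0:ℂ)
def u25 : EKS := mkE (1:ℂ) (0:ℂ) s2
def u26 : EKS := mkE (1:ℂ) (0:ℂ) (1:ℂ)
def u27 : EKS := mkE (1:ℂ) s2 ((-1):ℂ)
def u28 : EKS := mkE (1:ℂ) s2 (0:ℂ)
def u29 : EKS := mkE (1:ℂ) s2 (1:ℂ)
def u30 : EKS := mkE (1:ℂ) (1:ℂ) (-s2)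
def u31 : EKS := mkE (1:ℂ) (1:ℂ) (0:ℂ)
def u32 : EKS := mkE (1:ℂ) (1:ℂ) s2
def u33 : EKS := mkE s2 ((-3):ℂ) ((-1):ℂ)
def u34 : EKS := mkE s2 ((-3):ℂ) (1:ℂ)
def u35 : EKS := mkE s2 ((-1):ℂ) ((-3):ℂ)
def u36 : EKS := mkE s2 ((-1):ℂ) (3:ℂ)
def u37 : EKS := mkE s2 (1:ℂ) ((-3):ℂ)
def u38 : EKS := mkE s2 (1:ℂ) (3:ℂ)
def u39 : EKS := mkE s2 (3:ℂ) ((-1):ℂ)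
def u40 : EKS := mkE s2 (3:ℂ) (1:ℂ)
def u41 : EKS := mkE (1:ℂ) ((-3):ℂ) (-s2)
def u42 : EKS := mkE (1:ℂ) ((-3):ℂ) s2
def u43 : EKS := mkE (1:ℂ) (-s2) ((-3):ℂ)
def u44 : EKS := mkE (1:ℂ) (-s2) (3:ℂ)
def u45 : EKS := mkE (1:ℂ) s2 ((-3):ℂ)
def u46 : EKS := mkE (1:ℂ) s2 (3:ℂ)
def u47 : EKS := mkE (1:ℂ) (3:ℂ) (-s2)
def u48 : EKS := mkE (1:ℂ) (3:ℂ) s2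
def u49 : EKS := mkE (3:ℂ) ((-1):ℂ) (-s2)
def u50 : EKS := mkE (3:ℂ) ((-1):ℂ) s2
def u51 : EKS := mkE (3:ℂ) (-s2) ((-1):ℂ)
def u52 : EKS := mkE (3:ℂ) (-s2) (1:ℂ)
def u53 : EKS := mkE (3:ℂ) s2 ((-1):ℂ)
def u54 : EKS := mkE (3:ℂ) s2 (1:ℂ)
def u55 : EKS := mkE (3:ℂ) (1:ℂ) (-s2)
def u56 : EKS := mkE (3:ℂ) (1:ℂ) s2
lemma sl0 : (inner ℂ u0 u0 : ℂ) = (1:ℂ) := by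
  rw [u0, inner_mkE]; simp only [map_one, map_zero, map_neg, map_ofNat, s2_conj]; linear_combination (0:ℂ) * s2_mul_s2
lemma nz0 : (inner ℂ u0 u0 : ℂ) ≠ 0 := by rw [sl0]; norm_num
lemma sl1 : (inner ℂ u1 u1 : ℂ) = (3:ℂ) := by
  rw [u1, inner_mkE]; simp only [map_one, map_zero, map_neg, map_ofNat, s2_conj]; linear_combination (1:ℂ) * s2_mul_s2
lemma nz1 : (inner ℂ u1 u1 : ℂ) ≠ 0 := by rw [sl1]; norm_num
lemma sl2 : (inner ℂ u2 u2 : ℂ) = (3:ℂ) := by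
  rw [u2, inner_mkE]; simp only [map_one, map_zero, map_neg, map_ofNat, s2_conj]; linear_combination (1:ℂ) * s2_mul_s2
lemma nz2 : (inner ℂ u2 u2 : ℂ) ≠ 0 := by rw [sl2]; norm_num
lemma sl3 : (inner ℂ u3 u3 : ℂ) = (2:ℂ) := by
  rw [u3, inner_mkE]; simp only [map_one, map_zero, map_neg, map_ofNat, s2_conj]; linear_combination (0:ℂ) * s2_mul_s2
lemma nz3 : (inner ℂ u3 u3 : ℂ) ≠ 0 := by rw [sl3]; norm_num
lemma sl4 : (inner ℂ u4 u4 : ℂ) = (3:ℂ) := by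
  rw [u4, inner_mkE]; simp only [map_one, map_zero, map_neg, map_ofNat, s2_conj]; linear_combination (1:ℂ) * s2_mul_s2
lemma nz4 : (inner ℂ u4 u4 : ℂ) ≠ 0 := by rw [sl4]; norm_num
lemma sl5 : (inner ℂ u5 u5 : ℂ) = (1:ℂ) := by
  rw [u5, inner_mkE]; simp only [map_one, map_zero, map_neg, map_ofNat, s2_conj]; linear_combination (0:ℂ) * s2_mul_s2
lemma nz5 : (inner ℂ u5 u5 : ℂ) ≠ 0 := by rw [sl5]; norm_num
lemma sl6 : (inner ℂ u6 u6 : ℂ) = (3:ℂ) := by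
  rw [u6, inner_mkE]; simp only [map_one, map_zero, map_neg, map_ofNat, s2_conj]; linear_combination (1:ℂ) * s2_mul_s2
lemma nz6 : (inner ℂ u6 u6 : ℂ) ≠ 0 := by rw [sl6]; norm_num
lemma sl7 : (inner ℂ u7 u7 : ℂ) = (2:ℂ) := by
  rw [u7, inner_mkE]; simp only [map_one, map_zero, map_neg, map_ofNat, s2_conj]; linear_combination (0:ℂ) * s2_mul_s2
lemma nz7 : (inner ℂ u7 u7 : ℂ) ≠ 0 := by rw [sl7]; norm_num
lemma sl8 : (inner ℂ u8 u8 : ℂ) = (4:ℂ) := by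
  rw [u8, inner_mkE]; simp only [map_one, map_zero, map_neg, map_ofNat, s2_conj]; linear_combination (1:ℂ) * s2_mul_s2
lemma nz8 : (inner ℂ u8 u8 : ℂ) ≠ 0 := by rw [sl8]; norm_num
lemma sl9 : (inner ℂ u9 u9 : ℂ) = (3:ℂ) := by
  rw [u9, inner_mkE]; simp only [map_one, map_zero, map_neg, map_ofNat, s2_conj]; linear_combination (1:ℂ) * s2_mul_s2
lemma nz9 : (inner ℂ u9 u9 : ℂ) ≠ 0 := by rw [sl9]; norm_num
lemma sl10 : (inner ℂ u10 u10 : ℂ) = (4:ℂ) := by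
  rw [u10, inner_mkE]; simp only [map_one, map_zero, map_neg, map_ofNat, s2_conj]; linear_combination (1:ℂ) * s2_mul_s2
lemma nz10 : (inner ℂ u10 u10 : ℂ) ≠ 0 := by rw [sl10]; norm_num
lemma sl11 : (inner ℂ u11 u11 : ℂ) = (3:ℂ) := by
  rw [u11, inner_mkE]; simp only [map_one, map_zero, map_neg, map_ofNat, s2_conj]; linear_combination (1:ℂ) * s2_mul_s2
lemma nz11 : (inner ℂ u11 u11 : ℂ) ≠ 0 := by rw [sl11]; norm_num
lemma sl12 : (inner ℂ u12 u12 : ℂ) = (3:ℂ) := by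
  rw [u12, inner_mkE]; simp only [map_one, map_zero, map_neg, map_ofNat, s2_conj]; linear_combination (1:ℂ) * s2_mul_s2
lemma nz12 : (inner ℂ u12 u12 : ℂ) ≠ 0 := by rw [sl12]; norm_num
lemma sl13 : (inner ℂ u13 u13 : ℂ) = (4:ℂ) := by
  rw [u13, inner_mkE]; simp only [map_one, map_zero, map_neg, map_ofNat, s2_conj]; linear_combination (1:ℂ) * s2_mul_s2
lemma nz13 : (inner ℂ u13 u13 : ℂ) ≠ 0 := by rw [sl13]; norm_num
lemma sl14 : (inner ℂ u14 u14 : ℂ) = (3:ℂ) := by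
  rw [u14, inner_mkE]; simp only [map_one, map_zero, map_neg, map_ofNat, s2_conj]; linear_combination (1:ℂ) * s2_mul_s2
lemma nz14 : (inner ℂ u14 u14 : ℂ) ≠ 0 := by rw [sl14]; norm_num
lemma sl15 : (inner ℂ u15 u15 : ℂ) = (4:ℂ) := by
  rw [u15, inner_mkE]; simp only [map_one, map_zero, map_neg, map_ofNat, s2_conj]; linear_combination (1:ℂ) * s2_mul_s2
lemma nz15 : (inner ℂ u15 u15 : ℂ) ≠ 0 := by rw [sl15]; norm_num
lemma sl16 : (inner ℂ u16 u16 : ℂ) = (4:ℂ) := by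
  rw [u16, inner_mkE]; simp only [map_one, map_zero, map_neg, map_ofNat, s2_conj]; linear_combination (1:ℂ) * s2_mul_s2
lemma nz16 : (inner ℂ u16 u16 : ℂ) ≠ 0 := by rw [sl16]; norm_num
lemma sl17 : (inner ℂ u17 u17 : ℂ) = (2:ℂ) := by
  rw [u17, inner_mkE]; simp only [map_one, map_zero, map_neg, map_ofNat, s2_conj]; linear_combination (0:ℂ) * s2_mul_s2
lemma nz17 : (inner ℂ u17 u17 : ℂ) ≠ 0 := by rw [sl17]; norm_num
lemma sl18 : (inner ℂ u18 u18 : ℂ) = (4:ℂ) := by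
  rw [u18, inner_mkE]; simp only [map_one, map_zero, map_neg, map_ofNat, s2_conj]; linear_combination (1:ℂ) * s2_mul_s2
lemma nz18 : (inner ℂ u18 u18 : ℂ) ≠ 0 := by rw [sl18]; norm_num
lemma sl19 : (inner ℂ u19 u19 : ℂ) = (4:ℂ) := by
  rw [u19, inner_mkE]; simp only [map_one, map_zero, map_neg, map_ofNat, s2_conj]; linear_combination (1:ℂ) * s2_mul_s2
lemma nz19 : (inner ℂ u19 u19 : ℂ) ≠ 0 := by rw [sl19]; norm_num
lemma sl20 : (inner ℂ u20 u20 : ℂ) = (3:ℂ) := by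
  rw [u20, inner_mkE]; simp only [map_one, map_zero, map_neg, map_ofNat, s2_conj]; linear_combination (1:ℂ) * s2_mul_s2
lemma nz20 : (inner ℂ u20 u20 : ℂ) ≠ 0 := by rw [sl20]; norm_num
lemma sl21 : (inner ℂ u21 u21 : ℂ) = (4:ℂ) := by
  rw [u21, inner_mkE]; simp only [map_one, map_zero, map_neg, map_ofNat, s2_conj]; linear_combination (1:ℂ) * s2_mul_s2
lemma nz21 : (inner ℂ u21 u21 : ℂ) ≠ 0 := by rw [sl21]; norm_num
lemma sl22 : (inner ℂ u22 u22 : ℂ) = (2:ℂ) := by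
  rw [u22, inner_mkE]; simp only [map_one, map_zero, map_neg, map_ofNat, s2_conj]; linear_combination (0:ℂ) * s2_mul_s2
lemma nz22 : (inner ℂ u22 u22 : ℂ) ≠ 0 := by rw [sl22]; norm_num
lemma sl23 : (inner ℂ u23 u23 : ℂ) = (3:ℂ) := by
  rw [u23, inner_mkE]; simp only [map_one, map_zero, map_neg, map_ofNat, s2_conj]; linear_combination (1:ℂ) * s2_mul_s2
lemma nz23 : (inner ℂ u23 u23 : ℂ) ≠ 0 := by rw [sl23]; norm_num
lemma sl24 : (inner ℂ u24 u24 : ℂ) = (1:ℂ) := by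
  rw [u24, inner_mkE]; simp only [map_one, map_zero, map_neg, map_ofNat, s2_conj]; linear_combination (0:ℂ) * s2_mul_s2
lemma nz24 : (inner ℂ u24 u24 : ℂ) ≠ 0 := by rw [sl24]; norm_num
lemma sl25 : (inner ℂ u25 u25 : ℂ) = (3:ℂ) := by
  rw [u25, inner_mkE]; simp only [map_one, map_zero, map_neg, map_ofNat, s2_conj]; linear_combination (1:ℂ) * s2_mul_s2
lemma nz25 : (inner ℂ u25 u25 : ℂ) ≠ 0 := by rw [sl25]; norm_num
lemma sl26 : (inner ℂ u26 u26 : ℂ) = (2:ℂ) := by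
  rw [u26, inner_mkE]; simp only [map_one, map_zero, map_neg, map_ofNat, s2_conj]; linear_combination (0:ℂ) * s2_mul_s2
lemma nz26 : (inner ℂ u26 u26 : ℂ) ≠ 0 := by rw [sl26]; norm_num
lemma sl27 : (inner ℂ u27 u27 : ℂ) = (4:ℂ) := by
  rw [u27, inner_mkE]; simp only [map_one, map_zero, map_neg, map_ofNat, s2_conj]; linear_combination (1:ℂ) * s2_mul_s2
lemma nz27 : (inner ℂ u27 u27 : ℂ) ≠ 0 := by rw [sl27]; norm_num
lemma sl28 : (inner ℂ u28 u28 : ℂ) = (3:ℂ) := by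
  rw [u28, inner_mkE]; simp only [map_one, map_zero, map_neg, map_ofNat, s2_conj]; linear_combination (1:ℂ) * s2_mul_s2
lemma nz28 : (inner ℂ u28 u28 : ℂ) ≠ 0 := by rw [sl28]; norm_num
lemma sl29 : (inner ℂ u29 u29 : ℂ) = (4:ℂ) := by
  rw [u29, inner_mkE]; simp only [map_one, map_zero, map_neg, map_ofNat, s2_conj]; linear_combination (1:ℂ) * s2_mul_s2
lemma nz29 : (inner ℂ u29 u29 : ℂ) ≠ 0 := by rw [sl29]; norm_num
lemma sl30 : (inner ℂ u30 u30 : ℂ) = (4:ℂ) := by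
  rw [u30, inner_mkE]; simp only [map_one, map_zero, map_neg, map_ofNat, s2_conj]; linear_combination (1:ℂ) * s2_mul_s2
lemma nz30 : (inner ℂ u30 u30 : ℂ) ≠ 0 := by rw [sl30]; norm_num
lemma sl31 : (inner ℂ u31 u31 : ℂ) = (2:ℂ) := by
  rw [u31, inner_mkE]; simp only [map_one, map_zero, map_neg, map_ofNat, s2_conj]; linear_combination (0:ℂ) * s2_mul_s2
lemma nz31 : (inner ℂ u31 u31 : ℂ) ≠ 0 := by rw [sl31]; norm_num
lemma sl32 : (inner ℂ u32 u32 : ℂ) = (4:ℂ) := by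
  rw [u32, inner_mkE]; simp only [map_one, map_zero, map_neg, map_ofNat, s2_conj]; linear_combination (1:ℂ) * s2_mul_s2
lemma nz32 : (inner ℂ u32 u32 : ℂ) ≠ 0 := by rw [sl32]; norm_num
lemma sl33 : (inner ℂ u33 u33 : ℂ) = (12:ℂ) := by
  rw [u33, inner_mkE]; simp only [map_one, map_zero, map_neg, map_ofNat, s2_conj]; linear_combination (1:ℂ) * s2_mul_s2
lemma nz33 : (inner ℂ u33 u33 : ℂ) ≠ 0 := by rw [sl33]; norm_num
lemma sl34 : (inner ℂ u34 u34 : ℂ) = (12:ℂ) := by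
  rw [u34, inner_mkE]; simp only [map_one, map_zero, map_neg, map_ofNat, s2_conj]; linear_combination (1:ℂ) * s2_mul_s2
lemma nz34 : (inner ℂ u34 u34 : ℂ) ≠ 0 := by rw [sl34]; norm_num
lemma sl35 : (inner ℂ u35 u35 : ℂ) = (12:ℂ) := by
  rw [u35, inner_mkE]; simp only [map_one, map_zero, map_neg, map_ofNat, s2_conj]; linear_combination (1:ℂ) * s2_mul_s2
lemma nz35 : (inner ℂ u35 u35 : ℂ) ≠ 0 := by rw [sl35]; norm_num
lemma sl36 : (inner ℂ u36 u36 : ℂ) = (12:ℂ) := by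
  rw [u36, inner_mkE]; simp only [map_one, map_zero, map_neg, map_ofNat, s2_conj]; linear_combination (1:ℂ) * s2_mul_s2
lemma nz36 : (inner ℂ u36 u36 : ℂ) ≠ 0 := by rw [sl36]; norm_num
lemma sl37 : (inner ℂ u37 u37 : ℂ) = (12:ℂ) := by
  rw [u37, inner_mkE]; simp only [map_one, map_zero, map_neg, map_ofNat, s2_conj]; linear_combination (1:ℂ) * s2_mul_s2
lemma nz37 : (inner ℂ u37 u37 : ℂ) ≠ 0 := by rw [sl37]; norm_num
lemma sl38 : (inner ℂ u38 u38 : ℂ) = (12:ℂ) := by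
  rw [u38, inner_mkE]; simp only [map_one, map_zero, map_neg, map_ofNat, s2_conj]; linear_combination (1:ℂ) * s2_mul_s2
lemma nz38 : (inner ℂ u38 u38 : ℂ) ≠ 0 := by rw [sl38]; norm_num
lemma sl39 : (inner ℂ u39 u39 : ℂ) = (12:ℂ) := by
  rw [u39, inner_mkE]; simp only [map_one, map_zero, map_neg, map_ofNat, s2_conj]; linear_combination (1:ℂ) * s2_mul_s2
lemma nz39 : (inner ℂ u39 u39 : ℂ) ≠ 0 := by rw [sl39]; norm_num
lemma sl40 : (inner ℂ u40 u40 : ℂ) = (12:ℂ) := by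
  rw [u40, inner_mkE]; simp only [map_one, map_zero, map_neg, map_ofNat, s2_conj]; linear_combination (1:ℂ) * s2_mul_s2
lemma nz40 : (inner ℂ u40 u40 : ℂ) ≠ 0 := by rw [sl40]; norm_num
lemma sl41 : (inner ℂ u41 u41 : ℂ) = (12:ℂ) := by
  rw [u41, inner_mkE]; simp only [map_one, map_zero, map_neg, map_ofNat, s2_conj]; linear_combination (1:ℂ) * s2_mul_s2
lemma nz41 : (inner ℂ u41 u41 : ℂ) ≠ 0 := by rw [sl41]; norm_num
lemma sl42 : (inner ℂ u42 u42 : ℂ) = (12:ℂ) := by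
  rw [u42, inner_mkE]; simp only [map_one, map_zero, map_neg, map_ofNat, s2_conj]; linear_combination (1:ℂ) * s2_mul_s2
lemma nz42 : (inner ℂ u42 u42 : ℂ) ≠ 0 := by rw [sl42]; norm_num
lemma sl43 : (inner ℂ u43 u43 : ℂ) = (12:ℂ) := by
  rw [u43, inner_mkE]; simp only [map_one, map_zero, map_neg, map_ofNat, s2_conj]; linear_combination (1:ℂ) * s2_mul_s2
lemma nz43 : (inner ℂ u43 u43 : ℂ) ≠ 0 := by rw [sl43]; norm_num
lemma sl44 : (inner ℂ u44 u44 : ℂ) = (12:ℂ) := by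
  rw [u44, inner_mkE]; simp only [map_one, map_zero, map_neg, map_ofNat, s2_conj]; linear_combination (1:ℂ) * s2_mul_s2
lemma nz44 : (inner ℂ u44 u44 : ℂ) ≠ 0 := by rw [sl44]; norm_num
lemma sl45 : (inner ℂ u45 u45 : ℂ) = (12:ℂ) := by
  rw [u45, inner_mkE]; simp only [map_one, map_zero, map_neg, map_ofNat, s2_conj]; linear_combination (1:ℂ) * s2_mul_s2
lemma nz45 : (inner ℂ u45 u45 : ℂ) ≠ 0 := by rw [sl45]; norm_num
lemma sl46 : (inner ℂ u46 u46 : ℂ) = (12:ℂ) := by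
  rw [u46, inner_mkE]; simp only [map_one, map_zero, map_neg, map_ofNat, s2_conj]; linear_combination (1:ℂ) * s2_mul_s2
lemma nz46 : (inner ℂ u46 u46 : ℂ) ≠ 0 := by rw [sl46]; norm_num
lemma sl47 : (inner ℂ u47 u47 : ℂ) = (12:ℂ) := by
  rw [u47, inner_mkE]; simp only [map_one, map_zero, map_neg, map_ofNat, s2_conj]; linear_combination (1:ℂ) * s2_mul_s2
lemma nz47 : (inner ℂ u47 u47 : ℂ) ≠ 0 := by rw [sl47]; norm_num
lemma sl48 : (inner ℂ u48 u48 : ℂ) = (12:ℂ) := by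
  rw [u48, inner_mkE]; simp only [map_one, map_zero, map_neg, map_ofNat, s2_conj]; linear_combination (1:ℂ) * s2_mul_s2
lemma nz48 : (inner ℂ u48 u48 : ℂ) ≠ 0 := by rw [sl48]; norm_num
lemma sl49 : (inner ℂ u49 u49 : ℂ) = (12:ℂ) := by
  rw [u49, inner_mkE]; simp only [map_one, map_zero, map_neg, map_ofNat, s2_conj]; linear_combination (1:ℂ) * s2_mul_s2
lemma nz49 : (inner ℂ u49 u49 : ℂ) ≠ 0 := by rw [sl49]; norm_num
lemma sl50 : (inner ℂ u50 u50 : ℂ) = (12:ℂ) := by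
  rw [u50, inner_mkE]; simp only [map_one, map_zero, map_neg, map_ofNat, s2_conj]; linear_combination (1:ℂ) * s2_mul_s2
lemma nz50 : (inner ℂ u50 u50 : ℂ) ≠ 0 := by rw [sl50]; norm_num
lemma sl51 : (inner ℂ u51 u51 : ℂ) = (12:ℂ) := by
  rw [u51, inner_mkE]; simp only [map_one, map_zero, map_neg, map_ofNat, s2_conj]; linear_combination (1:ℂ) * s2_mul_s2
lemma nz51 : (inner ℂ u51 u51 : ℂ) ≠ 0 := by rw [sl51]; norm_num
lemma sl52 : (inner ℂ u52 u52 : ℂ) = (12:ℂ) := by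
  rw [u52, inner_mkE]; simp only [map_one, map_zero, map_neg, map_ofNat, s2_conj]; linear_combination (1:ℂ) * s2_mul_s2
lemma nz52 : (inner ℂ u52 u52 : ℂ) ≠ 0 := by rw [sl52]; norm_num
lemma sl53 : (inner ℂ u53 u53 : ℂ) = (12:ℂ) := by
  rw [u53, inner_mkE]; simp only [map_one, map_zero, map_neg, map_ofNat, s2_conj]; linear_combination (1:ℂ) * s2_mul_s2
lemma nz53 : (inner ℂ u53 u53 : ℂ) ≠ 0 := by rw [sl53]; norm_num
lemma sl54 : (inner ℂ u54 u54 : ℂ) = (12:ℂ) := by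
  rw [u54, inner_mkE]; simp only [map_one, map_zero, map_neg, map_ofNat, s2_conj]; linear_combination (1:ℂ) * s2_mul_s2
lemma nz54 : (inner ℂ u54 u54 : ℂ) ≠ 0 := by rw [sl54]; norm_num
lemma sl55 : (inner ℂ u55 u55 : ℂ) = (12:ℂ) := by
  rw [u55, inner_mkE]; simp only [map_one, map_zero, map_neg, map_ofNat, s2_conj]; linear_combination (1:ℂ) * s2_mul_s2
lemma nz55 : (inner ℂ u55 u55 : ℂ) ≠ 0 := by rw [sl55]; norm_num
lemma sl56 : (inner ℂ u56 u56 : ℂ) = (12:ℂ) := by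
  rw [u56, inner_mkE]; simp only [map_one, map_zero, map_neg, map_ofNat, s2_conj]; linear_combination (1:ℂ) * s2_mul_s2
lemma nz56 : (inner ℂ u56 u56 : ℂ) ≠ 0 := by rw [sl56]; norm_num
lemma o0_5 : (inner ℂ u0 u5 : ℂ) = 0 := by
  rw [u0, u5, inner_mkE]; simp only [map_one, map_zero, map_neg, map_ofNat, s2_conj]; linear_combination (0:ℂ) * s2_mul_s2
lemma o0_9 : (inner ℂ u0 u9 : ℂ) = 0 := by
  rw [u0, u9, inner_mkE]; simp only [map_one, map_zero, map_neg, map_ofNat, s2_conj]; linear_combination (0:ℂ) * s2_mul_s2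
lemma o0_14 : (inner ℂ u0 u14 : ℂ) = 0 := by
  rw [u0, u14, inner_mkE]; simp only [map_one, map_zero, map_neg, map_ofNat, s2_conj]; linear_combination (0:ℂ) * s2_mul_s2
lemma o0_17 : (inner ℂ u0 u17 : ℂ) = 0 := by
  rw [u0, u17, inner_mkE]; simp only [map_one, map_zero, map_neg, map_ofNat, s2_conj]; linear_combination (0:ℂ) * s2_mul_s2
lemma o0_20 : (inner ℂ u0 u20 : ℂ) = 0 := by
  rw [u0, u20, inner_mkE]; simp only [map_one, map_zero, map_neg, map_ofNat, s2_conj]; linear_combination (0:ℂ) * s2_mul_s2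
lemma o0_24 : (inner ℂ u0 u24 : ℂ) = 0 := by
  rw [u0, u24, inner_mkE]; simp only [map_one, map_zero, map_neg, map_ofNat, s2_conj]; linear_combination (0:ℂ) * s2_mul_s2
lemma o0_28 : (inner ℂ u0 u28 : ℂ) = 0 := by
  rw [u0, u28, inner_mkE]; simp only [map_one, map_zero, map_neg, map_ofNat, s2_conj]; linear_combination (0:ℂ) * s2_mul_s2
lemma o0_31 : (inner ℂ u0 u31 : ℂ) = 0 := by
  rw [u0, u31, inner_mkE]; simp only [map_one, map_zero, map_neg, map_ofNat, s2_conj]; linear_combination (0:ℂ) * s2_mul_s2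
lemma o1_6 : (inner ℂ u1 u6 : ℂ) = 0 := by
  rw [u1, u6, inner_mkE]; simp only [map_one, map_zero, map_neg, map_ofNat, s2_conj]; linear_combination (0:ℂ) * s2_mul_s2
lemma o1_16 : (inner ℂ u1 u16 : ℂ) = 0 := by
  rw [u1, u16, inner_mkE]; simp only [map_one, map_zero, map_neg, map_ofNat, s2_conj]; linear_combination (0:ℂ) * s2_mul_s2
lemma o1_24 : (inner ℂ u1 u24 : ℂ) = 0 := by
  rw [u1, u24, inner_mkE]; simp only [map_one, map_zero, map_neg, map_ofNat, s2_conj]; linear_combination (0:ℂ) * s2_mul_s2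
lemma o1_32 : (inner ℂ u1 u32 : ℂ) = 0 := by
  rw [u1, u32, inner_mkE]; simp only [map_one, map_zero, map_neg, map_ofNat, s2_conj]; linear_combination (0:ℂ) * s2_mul_s2
lemma o1_49 : (inner ℂ u1 u49 : ℂ) = 0 := by
  rw [u1, u49, inner_mkE]; simp only [map_one, map_zero, map_neg, map_ofNat, s2_conj]; linear_combination (0:ℂ) * s2_mul_s2
lemma o1_56 : (inner ℂ u1 u56 : ℂ) = 0 := by
  rw [u1, u56, inner_mkE]; simp only [map_one, map_zero, map_neg, map_ofNat, s2_conj]; linear_combination (0:ℂ) * s2_mul_s2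
lemma o2_4 : (inner ℂ u2 u4 : ℂ) = 0 := by
  rw [u2, u4, inner_mkE]; simp only [map_one, map_zero, map_neg, map_ofNat, s2_conj]; linear_combination (0:ℂ) * s2_mul_s2
lemma o2_18 : (inner ℂ u2 u18 : ℂ) = 0 := by
  rw [u2, u18, inner_mkE]; simp only [map_one, map_zero, map_neg, map_ofNat, s2_conj]; linear_combination (0:ℂ) * s2_mul_s2
lemma o2_24 : (inner ℂ u2 u24 : ℂ) = 0 := by
  rw [u2, u24, inner_mkE]; simp only [map_one, map_zero, map_neg, map_ofNat, s2_conj]; linear_combination (0:ℂ) * s2_mul_s2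
lemma o2_30 : (inner ℂ u2 u30 : ℂ) = 0 := by
  rw [u2, u30, inner_mkE]; simp only [map_one, map_zero, map_neg, map_ofNat, s2_conj]; linear_combination (0:ℂ) * s2_mul_s2
lemma o2_50 : (inner ℂ u2 u50 : ℂ) = 0 := by
  rw [u2, u50, inner_mkE]; simp only [map_one, map_zero, map_neg, map_ofNat, s2_conj]; linear_combination (0:ℂ) * s2_mul_s2
lemma o2_55 : (inner ℂ u2 u55 : ℂ) = 0 := by
  rw [u2, u55, inner_mkE]; simp only [map_one, map_zero, map_neg, map_ofNat, s2_conj]; linear_combination (0:ℂ) * s2_mul_s2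
lemma o3_7 : (inner ℂ u3 u7 : ℂ) = 0 := by
  rw [u3, u7, inner_mkE]; simp only [map_one, map_zero, map_neg, map_ofNat, s2_conj]; linear_combination (0:ℂ) * s2_mul_s2
lemma o3_8 : (inner ℂ u3 u8 : ℂ) = 0 := by
  rw [u3, u8, inner_mkE]; simp only [map_one, map_zero, map_neg, map_ofNat, s2_conj]; linear_combination (0:ℂ) * s2_mul_s2
lemma o3_15 : (inner ℂ u3 u15 : ℂ) = 0 := by
  rw [u3, u15, inner_mkE]; simp only [map_one, map_zero, map_neg, map_ofNat, s2_conj]; linear_combination (0:ℂ) * s2_mul_s2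
lemma o3_24 : (inner ℂ u3 u24 : ℂ) = 0 := by
  rw [u3, u24, inner_mkE]; simp only [map_one, map_zero, map_neg, map_ofNat, s2_conj]; linear_combination (0:ℂ) * s2_mul_s2
lemma o4_19 : (inner ℂ u4 u19 : ℂ) = 0 := by
  rw [u4, u19, inner_mkE]; simp only [map_one, map_zero, map_neg, map_ofNat, s2_conj]; linear_combination (0:ℂ) * s2_mul_s2
lemma o4_24 : (inner ℂ u4 u24 : ℂ) = 0 := by
  rw [u4, u24, inner_mkE]; simp only [map_one, map_zero, map_neg, map_ofNat, s2_conj]; linear_combination (0:ℂ) * s2_mul_s2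
lemma o4_29 : (inner ℂ u4 u29 : ℂ) = 0 := by
  rw [u4, u29, inner_mkE]; simp only [map_one, map_zero, map_neg, map_ofNat, s2_conj]; linear_combination (0:ℂ) * s2_mul_s2
lemma o4_51 : (inner ℂ u4 u51 : ℂ) = 0 := by
  rw [u4, u51, inner_mkE]; simp only [map_one, map_zero, map_neg, map_ofNat, s2_conj]; linear_combination (0:ℂ) * s2_mul_s2
lemma o4_54 : (inner ℂ u4 u54 : ℂ) = 0 := by
  rw [u4, u54, inner_mkE]; simp only [map_one, map_zero, map_neg, map_ofNat, s2_conj]; linear_combination (0:ℂ) * s2_mul_s2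
lemma o5_11 : (inner ℂ u5 u11 : ℂ) = 0 := by
  rw [u5, u11, inner_mkE]; simp only [map_one, map_zero, map_neg, map_ofNat, s2_conj]; linear_combination (0:ℂ) * s2_mul_s2
lemma o5_12 : (inner ℂ u5 u12 : ℂ) = 0 := by
  rw [u5, u12, inner_mkE]; simp only [map_one, map_zero, map_neg, map_ofNat, s2_conj]; linear_combination (0:ℂ) * s2_mul_s2
lemma o5_22 : (inner ℂ u5 u22 : ℂ) = 0 := by
  rw [u5, u22, inner_mkE]; simp only [map_one, map_zero, map_neg, map_ofNat, s2_conj]; linear_combination (0:ℂ) * s2_mul_s2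
lemma o5_23 : (inner ℂ u5 u23 : ℂ) = 0 := by
  rw [u5, u23, inner_mkE]; simp only [map_one, map_zero, map_neg, map_ofNat, s2_conj]; linear_combination (0:ℂ) * s2_mul_s2
lemma o5_24 : (inner ℂ u5 u24 : ℂ) = 0 := by
  rw [u5, u24, inner_mkE]; simp only [map_one, map_zero, map_neg, map_ofNat, s2_conj]; linear_combination (0:ℂ) * s2_mul_s2
lemma o5_25 : (inner ℂ u5 u25 : ℂ) = 0 := by
  rw [u5, u25, inner_mkE]; simp only [map_one, map_zero, map_neg, map_ofNat, s2_conj]; linear_combination (0:ℂ) * s2_mul_s2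
lemma o5_26 : (inner ℂ u5 u26 : ℂ) = 0 := by
  rw [u5, u26, inner_mkE]; simp only [map_one, map_zero, map_neg, map_ofNat, s2_conj]; linear_combination (0:ℂ) * s2_mul_s2
lemma o6_21 : (inner ℂ u6 u21 : ℂ) = 0 := by
  rw [u6, u21, inner_mkE]; simp only [map_one, map_zero, map_neg, map_ofNat, s2_conj]; linear_combination (0:ℂ) * s2_mul_s2
lemma o6_24 : (inner ℂ u6 u24 : ℂ) = 0 := by
  rw [u6, u24, inner_mkE]; simp only [map_one, map_zero, map_neg, map_ofNat, s2_conj]; linear_combination (0:ℂ) * s2_mul_s2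
lemma o6_27 : (inner ℂ u6 u27 : ℂ) = 0 := by
  rw [u6, u27, inner_mkE]; simp only [map_one, map_zero, map_neg, map_ofNat, s2_conj]; linear_combination (0:ℂ) * s2_mul_s2
lemma o6_52 : (inner ℂ u6 u52 : ℂ) = 0 := by
  rw [u6, u52, inner_mkE]; simp only [map_one, map_zero, map_neg, map_ofNat, s2_conj]; linear_combination (0:ℂ) * s2_mul_s2
lemma o6_53 : (inner ℂ u6 u53 : ℂ) = 0 := by
  rw [u6, u53, inner_mkE]; simp only [map_one, map_zero, map_neg, map_ofNat, s2_conj]; linear_combination (0:ℂ) * s2_mul_s2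
lemma o7_10 : (inner ℂ u7 u10 : ℂ) = 0 := by
  rw [u7, u10, inner_mkE]; simp only [map_one, map_zero, map_neg, map_ofNat, s2_conj]; linear_combination (0:ℂ) * s2_mul_s2
lemma o7_13 : (inner ℂ u7 u13 : ℂ) = 0 := by
  rw [u7, u13, inner_mkE]; simp only [map_one, map_zero, map_neg, map_ofNat, s2_conj]; linear_combination (0:ℂ) * s2_mul_s2
lemma o7_24 : (inner ℂ u7 u24 : ℂ) = 0 := by
  rw [u7, u24, inner_mkE]; simp only [map_one, map_zero, map_neg, map_ofNat, s2_conj]; linear_combination (0:ℂ) * s2_mul_s2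
lemma o8_15 : (inner ℂ u8 u15 : ℂ) = 0 := by
  rw [u8, u15, inner_mkE]; simp only [map_one, map_zero, map_neg, map_ofNat, s2_conj]; linear_combination (1:ℂ) * s2_mul_s2
lemma o8_25 : (inner ℂ u8 u25 : ℂ) = 0 := by
  rw [u8, u25, inner_mkE]; simp only [map_one, map_zero, map_neg, map_ofNat, s2_conj]; linear_combination (0:ℂ) * s2_mul_s2
lemma o8_28 : (inner ℂ u8 u28 : ℂ) = 0 := by
  rw [u8, u28, inner_mkE]; simp only [map_one, map_zero, map_neg, map_ofNat, s2_conj]; linear_combination (0:ℂ) * s2_mul_s2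
lemma o8_36 : (inner ℂ u8 u36 : ℂ) = 0 := by
  rw [u8, u36, inner_mkE]; simp only [map_one, map_zero, map_neg, map_ofNat, s2_conj]; linear_combination (1:ℂ) * s2_mul_s2
lemma o8_39 : (inner ℂ u8 u39 : ℂ) = 0 := by
  rw [u8, u39, inner_mkE]; simp only [map_one, map_zero, map_neg, map_ofNat, s2_conj]; linear_combination (1:ℂ) * s2_mul_s2
lemma o9_27 : (inner ℂ u9 u27 : ℂ) = 0 := by
  rw [u9, u27, inner_mkE]; simp only [map_one, map_zero, map_neg, map_ofNat, s2_conj]; linear_combination (0:ℂ) * s2_mul_s2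
lemma o9_28 : (inner ℂ u9 u28 : ℂ) = 0 := by
  rw [u9, u28, inner_mkE]; simp only [map_one, map_zero, map_neg, map_ofNat, s2_conj]; linear_combination (0:ℂ) * s2_mul_s2
lemma o9_29 : (inner ℂ u9 u29 : ℂ) = 0 := by
  rw [u9, u29, inner_mkE]; simp only [map_one, map_zero, map_neg, map_ofNat, s2_conj]; linear_combination (0:ℂ) * s2_mul_s2
lemma o9_45 : (inner ℂ u9 u45 : ℂ) = 0 := by
  rw [u9, u45, inner_mkE]; simp only [map_one, map_zero, map_neg, map_ofNat, s2_conj]; linear_combination (0:ℂ) * s2_mul_s2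
lemma o9_46 : (inner ℂ u9 u46 : ℂ) = 0 := by
  rw [u9, u46, inner_mkE]; simp only [map_one, map_zero, map_neg, map_ofNat, s2_conj]; linear_combination (0:ℂ) * s2_mul_s2
lemma o10_13 : (inner ℂ u10 u13 : ℂ) = 0 := by
  rw [u10, u13, inner_mkE]; simp only [map_one, map_zero, map_neg, map_ofNat, s2_conj]; linear_combination (1:ℂ) * s2_mul_s2
lemma o10_23 : (inner ℂ u10 u23 : ℂ) = 0 := by
  rw [u10, u23, inner_mkE]; simp only [map_one, map_zero, map_neg, map_ofNat, s2_conj]; linear_combination (0:ℂ) * s2_mul_s2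
lemma o10_28 : (inner ℂ u10 u28 : ℂ) = 0 := by
  rw [u10, u28, inner_mkE]; simp only [map_one, map_zero, map_neg, map_ofNat, s2_conj]; linear_combination (0:ℂ) * s2_mul_s2
lemma o10_35 : (inner ℂ u10 u35 : ℂ) = 0 := by
  rw [u10, u35, inner_mkE]; simp only [map_one, map_zero, map_neg, map_ofNat, s2_conj]; linear_combination (1:ℂ) * s2_mul_s2
lemma o10_40 : (inner ℂ u10 u40 : ℂ) = 0 := by
  rw [u10, u40, inner_mkE]; simp only [map_one, map_zero, map_neg, map_ofNat, s2_conj]; linear_combination (1:ℂ) * s2_mul_s2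
lemma o11_18 : (inner ℂ u11 u18 : ℂ) = 0 := by
  rw [u11, u18, inner_mkE]; simp only [map_one, map_zero, map_neg, map_ofNat, s2_conj]; linear_combination (0:ℂ) * s2_mul_s2
lemma o11_25 : (inner ℂ u11 u25 : ℂ) = 0 := by
  rw [u11, u25, inner_mkE]; simp only [map_one, map_zero, map_neg, map_ofNat, s2_conj]; linear_combination (0:ℂ) * s2_mul_s2
lemma o11_32 : (inner ℂ u11 u32 : ℂ) = 0 := by
  rw [u11, u32, inner_mkE]; simp only [map_one, map_zero, map_neg, map_ofNat, s2_conj]; linear_combination (0:ℂ) * s2_mul_s2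
lemma o11_42 : (inner ℂ u11 u42 : ℂ) = 0 := by
  rw [u11, u42, inner_mkE]; simp only [map_one, map_zero, map_neg, map_ofNat, s2_conj]; linear_combination (0:ℂ) * s2_mul_s2
lemma o11_48 : (inner ℂ u11 u48 : ℂ) = 0 := by
  rw [u11, u48, inner_mkE]; simp only [map_one, map_zero, map_neg, map_ofNat, s2_conj]; linear_combination (0:ℂ) * s2_mul_s2
lemma o12_16 : (inner ℂ u12 u16 : ℂ) = 0 := by
  rw [u12, u16, inner_mkE]; simp only [map_one, map_zero, map_neg, map_ofNat, s2_conj]; linear_combination (0:ℂ) * s2_mul_s2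
lemma o12_23 : (inner ℂ u12 u23 : ℂ) = 0 := by
  rw [u12, u23, inner_mkE]; simp only [map_one, map_zero, map_neg, map_ofNat, s2_conj]; linear_combination (0:ℂ) * s2_mul_s2
lemma o12_30 : (inner ℂ u12 u30 : ℂ) = 0 := by
  rw [u12, u30, inner_mkE]; simp only [map_one, map_zero, map_neg, map_ofNat, s2_conj]; linear_combination (0:ℂ) * s2_mul_s2
lemma o12_41 : (inner ℂ u12 u41 : ℂ) = 0 := by
  rw [u12, u41, inner_mkE]; simp only [map_one, map_zero, map_neg, map_ofNat, s2_conj]; linear_combination (0:ℂ) * s2_mul_s2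
lemma o12_47 : (inner ℂ u12 u47 : ℂ) = 0 := by
  rw [u12, u47, inner_mkE]; simp only [map_one, map_zero, map_neg, map_ofNat, s2_conj]; linear_combination (0:ℂ) * s2_mul_s2
lemma o13_20 : (inner ℂ u13 u20 : ℂ) = 0 := by
  rw [u13, u20, inner_mkE]; simp only [map_one, map_zero, map_neg, map_ofNat, s2_conj]; linear_combination (0:ℂ) * s2_mul_s2
lemma o13_25 : (inner ℂ u13 u25 : ℂ) = 0 := by
  rw [u13, u25, inner_mkE]; simp only [map_one, map_zero, map_neg, map_ofNat, s2_conj]; linear_combination (0:ℂ) * s2_mul_s2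
lemma o13_33 : (inner ℂ u13 u33 : ℂ) = 0 := by
  rw [u13, u33, inner_mkE]; simp only [map_one, map_zero, map_neg, map_ofNat, s2_conj]; linear_combination (1:ℂ) * s2_mul_s2
lemma o13_38 : (inner ℂ u13 u38 : ℂ) = 0 := by
  rw [u13, u38, inner_mkE]; simp only [map_one, map_zero, map_neg, map_ofNat, s2_conj]; linear_combination (1:ℂ) * s2_mul_s2
lemma o14_19 : (inner ℂ u14 u19 : ℂ) = 0 := by
  rw [u14, u19, inner_mkE]; simp only [map_one, map_zero, map_neg, map_ofNat, s2_conj]; linear_combination (0:ℂ) * s2_mul_s2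
lemma o14_20 : (inner ℂ u14 u20 : ℂ) = 0 := by
  rw [u14, u20, inner_mkE]; simp only [map_one, map_zero, map_neg, map_ofNat, s2_conj]; linear_combination (0:ℂ) * s2_mul_s2
lemma o14_21 : (inner ℂ u14 u21 : ℂ) = 0 := by
  rw [u14, u21, inner_mkE]; simp only [map_one, map_zero, map_neg, map_ofNat, s2_conj]; linear_combination (0:ℂ) * s2_mul_s2
lemma o14_43 : (inner ℂ u14 u43 : ℂ) = 0 := by
  rw [u14, u43, inner_mkE]; simp only [map_one, map_zero, map_neg, map_ofNat, s2_conj]; linear_combination (0:ℂ) * s2_mul_s2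
lemma o14_44 : (inner ℂ u14 u44 : ℂ) = 0 := by
  rw [u14, u44, inner_mkE]; simp only [map_one, map_zero, map_neg, map_ofNat, s2_conj]; linear_combination (0:ℂ) * s2_mul_s2
lemma o15_20 : (inner ℂ u15 u20 : ℂ) = 0 := by
  rw [u15, u20, inner_mkE]; simp only [map_one, map_zero, map_neg, map_ofNat, s2_conj]; linear_combination (0:ℂ) * s2_mul_s2
lemma o15_23 : (inner ℂ u15 u23 : ℂ) = 0 := by
  rw [u15, u23, inner_mkE]; simp only [map_one, map_zero, map_neg, map_ofNat, s2_conj]; linear_combination (0:ℂ) * s2_mul_s2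
lemma o15_34 : (inner ℂ u15 u34 : ℂ) = 0 := by
  rw [u15, u34, inner_mkE]; simp only [map_one, map_zero, map_neg, map_ofNat, s2_conj]; linear_combination (1:ℂ) * s2_mul_s2
lemma o15_37 : (inner ℂ u15 u37 : ℂ) = 0 := by
  rw [u15, u37, inner_mkE]; simp only [map_one, map_zero, map_neg, map_ofNat, s2_conj]; linear_combination (1:ℂ) * s2_mul_s2
lemma o16_18 : (inner ℂ u16 u18 : ℂ) = 0 := by
  rw [u16, u18, inner_mkE]; simp only [map_one, map_zero, map_neg, map_ofNat, s2_conj]; linear_combination (-1:ℂ) * s2_mul_s2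
lemma o16_31 : (inner ℂ u16 u31 : ℂ) = 0 := by
  rw [u16, u31, inner_mkE]; simp only [map_one, map_zero, map_neg, map_ofNat, s2_conj]; linear_combination (0:ℂ) * s2_mul_s2
lemma o16_47 : (inner ℂ u16 u47 : ℂ) = 0 := by
  rw [u16, u47, inner_mkE]; simp only [map_one, map_zero, map_neg, map_ofNat, s2_conj]; linear_combination (1:ℂ) * s2_mul_s2
lemma o16_56 : (inner ℂ u16 u56 : ℂ) = 0 := by
  rw [u16, u56, inner_mkE]; simp only [map_one, map_zero, map_neg, map_ofNat, s2_conj]; linear_combination (-1:ℂ) * s2_mul_s2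
lemma o17_30 : (inner ℂ u17 u30 : ℂ) = 0 := by
  rw [u17, u30, inner_mkE]; simp only [map_one, map_zero, map_neg, map_ofNat, s2_conj]; linear_combination (0:ℂ) * s2_mul_s2
lemma o17_31 : (inner ℂ u17 u31 : ℂ) = 0 := by
  rw [u17, u31, inner_mkE]; simp only [map_one, map_zero, map_neg, map_ofNat, s2_conj]; linear_combination (0:ℂ) * s2_mul_s2
lemma o17_32 : (inner ℂ u17 u32 : ℂ) = 0 := by
  rw [u17, u32, inner_mkE]; simp only [map_one, map_zero, map_neg, map_ofNat, s2_conj]; linear_combination (0:ℂ) * s2_mul_s2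
lemma o18_31 : (inner ℂ u18 u31 : ℂ) = 0 := by
  rw [u18, u31, inner_mkE]; simp only [map_one, map_zero, map_neg, map_ofNat, s2_conj]; linear_combination (0:ℂ) * s2_mul_s2
lemma o18_48 : (inner ℂ u18 u48 : ℂ) = 0 := by
  rw [u18, u48, inner_mkE]; simp only [map_one, map_zero, map_neg, map_ofNat, s2_conj]; linear_combination (1:ℂ) * s2_mul_s2
lemma o18_55 : (inner ℂ u18 u55 : ℂ) = 0 := by
  rw [u18, u55, inner_mkE]; simp only [map_one, map_zero, map_neg, map_ofNat, s2_conj]; linear_combination (-1:ℂ) * s2_mul_s2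
lemma o19_26 : (inner ℂ u19 u26 : ℂ) = 0 := by
  rw [u19, u26, inner_mkE]; simp only [map_one, map_zero, map_neg, map_ofNat, s2_conj]; linear_combination (0:ℂ) * s2_mul_s2
lemma o19_27 : (inner ℂ u19 u27 : ℂ) = 0 := by
  rw [u19, u27, inner_mkE]; simp only [map_one, map_zero, map_neg, map_ofNat, s2_conj]; linear_combination (-1:ℂ) * s2_mul_s2
lemma o19_44 : (inner ℂ u19 u44 : ℂ) = 0 := by
  rw [u19, u44, inner_mkE]; simp only [map_one, map_zero, map_neg, map_ofNat, s2_conj]; linear_combination (1:ℂ) * s2_mul_s2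
lemma o19_54 : (inner ℂ u19 u54 : ℂ) = 0 := by
  rw [u19, u54, inner_mkE]; simp only [map_one, map_zero, map_neg, map_ofNat, s2_conj]; linear_combination (-1:ℂ) * s2_mul_s2
lemma o20_37 : (inner ℂ u20 u37 : ℂ) = 0 := by
  rw [u20, u37, inner_mkE]; simp only [map_one, map_zero, map_neg, map_ofNat, s2_conj]; linear_combination (0:ℂ) * s2_mul_s2
lemma o20_38 : (inner ℂ u20 u38 : ℂ) = 0 := by
  rw [u20, u38, inner_mkE]; simp only [map_one, map_zero, map_neg, map_ofNat, s2_conj]; linear_combination (0:ℂ) * s2_mul_s2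
lemma o21_22 : (inner ℂ u21 u22 : ℂ) = 0 := by
  rw [u21, u22, inner_mkE]; simp only [map_one, map_zero, map_neg, map_ofNat, s2_conj]; linear_combination (0:ℂ) * s2_mul_s2
lemma o21_29 : (inner ℂ u21 u29 : ℂ) = 0 := by
  rw [u21, u29, inner_mkE]; simp only [map_one, map_zero, map_neg, map_ofNat, s2_conj]; linear_combination (-1:ℂ) * s2_mul_s2
lemma o21_43 : (inner ℂ u21 u43 : ℂ) = 0 := by
  rw [u21, u43, inner_mkE]; simp only [map_one, map_zero, map_neg, map_ofNat, s2_conj]; linear_combination (1:ℂ) * s2_mul_s2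
lemma o21_53 : (inner ℂ u21 u53 : ℂ) = 0 := by
  rw [u21, u53, inner_mkE]; simp only [map_one, map_zero, map_neg, map_ofNat, s2_conj]; linear_combination (-1:ℂ) * s2_mul_s2
lemma o22_26 : (inner ℂ u22 u26 : ℂ) = 0 := by
  rw [u22, u26, inner_mkE]; simp only [map_one, map_zero, map_neg, map_ofNat, s2_conj]; linear_combination (0:ℂ) * s2_mul_s2
lemma o22_29 : (inner ℂ u22 u29 : ℂ) = 0 := by
  rw [u22, u29, inner_mkE]; simp only [map_one, map_zero, map_neg, map_ofNat, s2_conj]; linear_combination (0:ℂ) * s2_mul_s2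
lemma o23_34 : (inner ℂ u23 u34 : ℂ) = 0 := by
  rw [u23, u34, inner_mkE]; simp only [map_one, map_zero, map_neg, map_ofNat, s2_conj]; linear_combination (0:ℂ) * s2_mul_s2
lemma o23_40 : (inner ℂ u23 u40 : ℂ) = 0 := by
  rw [u23, u40, inner_mkE]; simp only [map_one, map_zero, map_neg, map_ofNat, s2_conj]; linear_combination (0:ℂ) * s2_mul_s2
lemma o25_33 : (inner ℂ u25 u33 : ℂ) = 0 := by
  rw [u25, u33, inner_mkE]; simp only [map_one, map_zero, map_neg, map_ofNat, s2_conj]; linear_combination (0:ℂ) * s2_mul_s2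
lemma o25_39 : (inner ℂ u25 u39 : ℂ) = 0 := by
  rw [u25, u39, inner_mkE]; simp only [map_one, map_zero, map_neg, map_ofNat, s2_conj]; linear_combination (0:ℂ) * s2_mul_s2
lemma o26_27 : (inner ℂ u26 u27 : ℂ) = 0 := by
  rw [u26, u27, inner_mkE]; simp only [map_one, map_zero, map_neg, map_ofNat, s2_conj]; linear_combination (0:ℂ) * s2_mul_s2
lemma o27_46 : (inner ℂ u27 u46 : ℂ) = 0 := by
  rw [u27, u46, inner_mkE]; simp only [map_one, map_zero, map_neg, map_ofNat, s2_conj]; linear_combination (1:ℂ) * s2_mul_s2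
lemma o27_52 : (inner ℂ u27 u52 : ℂ) = 0 := by
  rw [u27, u52, inner_mkE]; simp only [map_one, map_zero, map_neg, map_ofNat, s2_conj]; linear_combination (-1:ℂ) * s2_mul_s2
lemma o28_35 : (inner ℂ u28 u35 : ℂ) = 0 := by
  rw [u28, u35, inner_mkE]; simp only [map_one, map_zero, map_neg, map_ofNat, s2_conj]; linear_combination (0:ℂ) * s2_mul_s2
lemma o28_36 : (inner ℂ u28 u36 : ℂ) = 0 := by
  rw [u28, u36, inner_mkE]; simp only [map_one, map_zero, map_neg, map_ofNat, s2_conj]; linear_combination (0:ℂ) * s2_mul_s2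
lemma o29_45 : (inner ℂ u29 u45 : ℂ) = 0 := by
  rw [u29, u45, inner_mkE]; simp only [map_one, map_zero, map_neg, map_ofNat, s2_conj]; linear_combination (1:ℂ) * s2_mul_s2
lemma o29_51 : (inner ℂ u29 u51 : ℂ) = 0 := by
  rw [u29, u51, inner_mkE]; simp only [map_one, map_zero, map_neg, map_ofNat, s2_conj]; linear_combination (-1:ℂ) * s2_mul_s2
lemma o30_32 : (inner ℂ u30 u32 : ℂ) = 0 := by
  rw [u30, u32, inner_mkE]; simp only [map_one, map_zero, map_neg, map_ofNat, s2_conj]; linear_combination (-1:ℂ) * s2_mul_s2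
lemma o30_41 : (inner ℂ u30 u41 : ℂ) = 0 := by
  rw [u30, u41, inner_mkE]; simp only [map_one, map_zero, map_neg, map_ofNat, s2_conj]; linear_combination (1:ℂ) * s2_mul_s2
lemma o30_50 : (inner ℂ u30 u50 : ℂ) = 0 := by
  rw [u30, u50, inner_mkE]; simp only [map_one, map_zero, map_neg, map_ofNat, s2_conj]; linear_combination (-1:ℂ) * s2_mul_s2
lemma o32_42 : (inner ℂ u32 u42 : ℂ) = 0 := by
  rw [u32, u42, inner_mkE]; simp only [map_one, map_zero, map_neg, map_ofNat, s2_conj]; linear_combination (1:ℂ) * s2_mul_s2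
lemma o32_49 : (inner ℂ u32 u49 : ℂ) = 0 := by
  rw [u32, u49, inner_mkE]; simp only [map_one, map_zero, map_neg, map_ofNat, s2_conj]; linear_combination (-1:ℂ) * s2_mul_s2

end KSsetup

/-- Kochen–Specker via gluing: on `ℂ³` there is no compatible family of local
valuations, one for each context, each obeying the Value-Rule and FUNC on its
context and agreeing with the others on intersections of contexts. -/
theorem no_compatible_family_of_local_valuations :
    ¬ ∃ v : Set (EuclideanSpace ℂ (Fin 3) →L[ℂ] EuclideanSpace ℂ (Fin 3)) →
        (EuclideanSpace ℂ (Fin 3) →L[ℂ] EuclideanSpace ℂ (Fin 3)) → ℝ,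
      (∀ C, IsContext C → ∀ A ∈ C,
        ((v C A : ℂ) ∈ spectrum ℂ A ∧
         ∀ p : Polynomial ℝ, aeval A (p.map (algebraMap ℝ ℂ)) ∈ C →
           v C (aeval A (p.map (algebraMap ℝ ℂ))) = p.eval (v C A))) ∧
      (∀ C D, IsContext C → IsContext D → ∀ A, A ∈ C → A ∈ D →
        v C A = v D A) := by
  rintro ⟨v, h1, h2⟩
  have T0 := KS_key v h1 h2 u9 u29 u45 o9_29 o9_45 o29_45 nz9 nz29 nz45
  have T1 := KS_key v h1 h2 u0 u5 u24 o0_5 o0_24 o5_24 nz0 nz5 nz24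
  have T2 := KS_key v h1 h2 u2 u4 u24 o2_4 o2_24 o4_24 nz2 nz4 nz24
  have T3 := KS_key v h1 h2 u7 u10 u13 o7_10 o7_13 o10_13 nz7 nz10 nz13
  have T4 := KS_key v h1 h2 u16 u18 u31 o16_18 o16_31 o18_31 nz16 nz18 nz31
  have T5 := KS_key v h1 h2 u8 u28 u36 o8_28 o8_36 o28_36 nz8 nz28 nz36
  have T6 := KS_key v h1 h2 u3 u8 u15 o3_8 o3_15 o8_15 nz3 nz8 nz15
  have T7 := KS_key v h1 h2 u4 u29 u51 o4_29 o4_51 o29_51 nz4 nz29 nz51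
  have T8 := KS_key v h1 h2 u2 u18 u55 o2_18 o2_55 o18_55 nz2 nz18 nz55
  have T9 := KS_key v h1 h2 u2 u30 u50 o2_30 o2_50 o30_50 nz2 nz30 nz50
  have T10 := KS_key v h1 h2 u5 u12 u23 o5_12 o5_23 o12_23 nz5 nz12 nz23
  have T11 := KS_key v h1 h2 u19 u26 u27 o19_26 o19_27 o26_27 nz19 nz26 nz27
  have T12 := KS_key v h1 h2 u15 u20 u37 o15_20 o15_37 o20_37 nz15 nz20 nz37
  have T13 := KS_key v h1 h2 u4 u19 u54 o4_19 o4_54 o19_54 nz4 nz19 nz54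
  have T14 := KS_key v h1 h2 u14 u19 u44 o14_19 o14_44 o19_44 nz14 nz19 nz44
  have T15 := KS_key v h1 h2 u10 u23 u40 o10_23 o10_40 o23_40 nz10 nz23 nz40
  have T16 := KS_key v h1 h2 u15 u23 u34 o15_23 o15_34 o23_34 nz15 nz23 nz34
  have T17 := KS_key v h1 h2 u13 u20 u38 o13_20 o13_38 o20_38 nz13 nz20 nz38
  have T18 := KS_key v h1 h2 u1 u16 u56 o1_16 o1_56 o16_56 nz1 nz16 nz56
  have T19 := KS_key v h1 h2 u11 u18 u48 o11_18 o11_48 o18_48 nz11 nz18 nz48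
  have T20 := KS_key v h1 h2 u3 u7 u24 o3_7 o3_24 o7_24 nz3 nz7 nz24
  have T21 := KS_key v h1 h2 u6 u21 u53 o6_21 o6_53 o21_53 nz6 nz21 nz53
  have T22 := KS_key v h1 h2 u17 u30 u32 o17_30 o17_32 o30_32 nz17 nz30 nz32
  have T23 := KS_key v h1 h2 u5 u22 u26 o5_22 o5_26 o22_26 nz5 nz22 nz26
  have T24 := KS_key v h1 h2 u9 u27 u46 o9_27 o9_46 o27_46 nz9 nz27 nz46
  have T25 := KS_key v h1 h2 u14 u21 u43 o14_21 o14_43 o21_43 nz14 nz21 nz43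
  have T26 := KS_key v h1 h2 u11 u32 u42 o11_32 o11_42 o32_42 nz11 nz32 nz42
  have T27 := KS_key v h1 h2 u8 u25 u39 o8_25 o8_39 o25_39 nz8 nz25 nz39
  have T28 := KS_key v h1 h2 u13 u25 u33 o13_25 o13_33 o25_33 nz13 nz25 nz33
  have T29 := KS_key v h1 h2 u6 u27 u52 o6_27 o6_52 o27_52 nz6 nz27 nz52
  have T30 := KS_key v h1 h2 u1 u6 u24 o1_6 o1_24 o6_24 nz1 nz6 nz24
  have T31 := KS_key v h1 h2 u0 u17 u31 o0_17 o0_31 o17_31 nz0 nz17 nz31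
  have T32 := KS_key v h1 h2 u12 u16 u47 o12_16 o12_47 o16_47 nz12 nz16 nz47
  have T33 := KS_key v h1 h2 u5 u11 u25 o5_11 o5_25 o11_25 nz5 nz11 nz25
  have T34 := KS_key v h1 h2 u0 u9 u28 o0_9 o0_28 o9_28 nz0 nz9 nz28
  have T35 := KS_key v h1 h2 u21 u22 u29 o21_22 o21_29 o22_29 nz21 nz22 nz29
  have T36 := KS_key v h1 h2 u1 u32 u49 o1_32 o1_49 o32_49 nz1 nz32 nz49
  have T37 := KS_key v h1 h2 u12 u30 u41 o12_30 o12_41 o30_41 nz12 nz30 nz41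
  have T38 := KS_key v h1 h2 u10 u28 u35 o10_28 o10_35 o28_35 nz10 nz28 nz35
  have T39 := KS_key v h1 h2 u0 u14 u20 o0_14 o0_20 o14_20 nz0 nz14 nz20
  rcases T0 with ⟨a0, b0, c0⟩ | ⟨a1, b1, c1⟩ | ⟨a2, b2, c2⟩
  · rcases T24 with ⟨a3, b3, c3⟩ | ⟨a4, b4, c4⟩ | ⟨a5, b5, c5⟩
    · rcases T34 with ⟨a6, b6, c6⟩ | ⟨a7, b7, c7⟩ | ⟨a8, b8, c8⟩
      · exact absurd (a0.symm.trans b6) one_ne_zero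
      · rcases T1 with ⟨a9, b9, c9⟩ | ⟨a10, b10, c10⟩ | ⟨a11, b11, c11⟩
        · exact absurd (a9.symm.trans a7) one_ne_zero
        · rcases T10 with ⟨a12, b12, c12⟩ | ⟨a13, b13, c13⟩ | ⟨a14, b14, c14⟩
          · rcases T23 with ⟨a15, b15, c15⟩ | ⟨a16, b16, c16⟩ | ⟨a17, b17, c17⟩
            · rcases T11 with ⟨a18, b18, c18⟩ | ⟨a19, b19, c19⟩ | ⟨a20, b20, c20⟩
              · rcases T35 with ⟨a21, b21, c21⟩ | ⟨a22, b22, c22⟩ | ⟨a23, b23, c23⟩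
                · rcases T13 with ⟨a24, b24, c24⟩ | ⟨a25, b25, c25⟩ | ⟨a26, b26, c26⟩
                  · exact absurd (a18.symm.trans b24) one_ne_zero
                  · rcases T2 with ⟨a27, b27, c27⟩ | ⟨a28, b28, c28⟩ | ⟨a29, b29, c29⟩
                    · rcases T7 with ⟨a30, b30, c30⟩ | ⟨a31, b31, c31⟩ | ⟨a32, b32, c32⟩
                      · exact absurd (a30.symm.trans a25) one_ne_zero
                      · exact absurd (b31.symm.trans b0) one_ne_zero
                      · rcases T8 with ⟨a33, b33, c33⟩ | ⟨a34, b34, c34⟩ | ⟨a35, b35, c35⟩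
                        · rcases T9 with ⟨a36, b36, c36⟩ | ⟨a37, b37, c37⟩ | ⟨a38, b38, c38⟩
                          · rcases T37 with ⟨a39, b39, c39⟩ | ⟨a40, b40, c40⟩ | ⟨a41, b41, c41⟩
                            · exact absurd (a39.symm.trans b12) one_ne_zero
                            · exact absurd (b40.symm.trans b36) one_ne_zero
                            · rcases T14 with ⟨a42, b42, c42⟩ | ⟨a43, b43, c43⟩ | ⟨a44, b44, c44⟩
                              · exact absurd (a18.symm.trans b42) one_ne_zero
                              · rcases T25 with ⟨a45, b45, c45⟩ | ⟨a46, b46, c46⟩ | ⟨a47, b47, c47⟩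
                                · exact absurd (a45.symm.trans a43) one_ne_zero
                                · rcases T39 with ⟨a48, b48, c48⟩ | ⟨a49, b49, c49⟩ | ⟨a50, b50, c50⟩
                                  · exact absurd (a48.symm.trans a7) one_ne_zero
                                  · exact absurd (b49.symm.trans a43) one_ne_zero
                                  · rcases T12 with ⟨a51, b51, c51⟩ | ⟨a52, b52, c52⟩ | ⟨a53, b53, c53⟩
                                    · exact absurd (c50.symm.trans b51) one_ne_zero
                                    · rcases T16 with ⟨a54, b54, c54⟩ | ⟨a55, b55, c55⟩ | ⟨a56, b56, c56⟩
                                      · exact absurd (a54.symm.trans a52) one_ne_zero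
                                      · exact absurd (b55.symm.trans c12) one_ne_zero
                                      · rcases T17 with ⟨a57, b57, c57⟩ | ⟨a58, b58, c58⟩ | ⟨a59, b59, c59⟩
                                        · exact absurd (c50.symm.trans b57) one_ne_zero
                                        · rcases T21 with ⟨a60, b60, c60⟩ | ⟨a61, b61, c61⟩ | ⟨a62, b62, c62⟩
                                          · exact absurd (a21.symm.trans b60) one_ne_zero
                                          · rcases T29 with ⟨a63, b63, c63⟩ | ⟨a64, b64, c64⟩ | ⟨a65, b65, c65⟩
                                            · exact absurd (a63.symm.trans a61) one_ne_zero
                                            · exact absurd (b64.symm.trans b3) one_ne_zero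
                                            · rcases T30 with ⟨a66, b66, c66⟩ | ⟨a67, b67, c67⟩ | ⟨a68, b68, c68⟩
                                              · rcases T18 with ⟨a69, b69, c69⟩ | ⟨a70, b70, c70⟩ | ⟨a71, b71, c71⟩
                                                · rcases T4 with ⟨a72, b72, c72⟩ | ⟨a73, b73, c73⟩ | ⟨a74, b74, c74⟩
                                                  · exact absurd (a72.symm.trans b69) one_ne_zero
                                                  · exact absurd (b73.symm.trans b33) one_ne_zero
                                                  · rcases T31 with ⟨a75, b75, c75⟩ | ⟨a76, b76, c76⟩ | ⟨a77, b77, c77⟩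
                                                    · exact absurd (a75.symm.trans a7) one_ne_zero
                                                    · exact absurd (c74.symm.trans c76) one_ne_zero
                                                    · rcases T22 with ⟨a78, b78, c78⟩ | ⟨a79, b79, c79⟩ | ⟨a80, b80, c80⟩
                                                      · exact absurd (a78.symm.trans b77) one_ne_zero
                                                      · exact absurd (b79.symm.trans b36) one_ne_zero
                                                      · rcases T36 with ⟨a81, b81, c81⟩ | ⟨a82, b82, c82⟩ | ⟨a83, b83, c83⟩
                                                        · exact absurd (c80.symm.trans b81) one_ne_zero
                                                        · exact absurd (a66.symm.trans a82) one_ne_zero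
                                                        · exact absurd (a66.symm.trans a83) one_ne_zero
                                                · exact absurd (a66.symm.trans a70) one_ne_zero
                                                · exact absurd (a66.symm.trans a71) one_ne_zero
                                              · exact absurd (b67.symm.trans a61) one_ne_zero
                                              · exact absurd (c68.symm.trans c10) one_ne_zero
                                          · exact absurd (a21.symm.trans b62) one_ne_zero
                                        · exact absurd (c50.symm.trans b59) one_ne_zero
                                    · exact absurd (c50.symm.trans b53) one_ne_zero
                                · exact absurd (a21.symm.trans b47) one_ne_zero
                              · exact absurd (a18.symm.trans b44) one_ne_zero
                          · exact absurd (a27.symm.trans a37) one_ne_zero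
                          · exact absurd (a27.symm.trans a38) one_ne_zero
                        · exact absurd (a27.symm.trans a34) one_ne_zero
                        · exact absurd (a27.symm.trans a35) one_ne_zero
                    · exact absurd (b28.symm.trans a25) one_ne_zero
                    · exact absurd (c29.symm.trans c10) one_ne_zero
                  · exact absurd (a18.symm.trans b26) one_ne_zero
                · exact absurd (b22.symm.trans b15) one_ne_zero
                · exact absurd (c23.symm.trans b0) one_ne_zero
              · exact absurd (b19.symm.trans c15) one_ne_zero
              · exact absurd (c20.symm.trans b3) one_ne_zero
            · exact absurd (b10.symm.trans a16) one_ne_zero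
            · exact absurd (b10.symm.trans a17) one_ne_zero
          · exact absurd (b10.symm.trans a13) one_ne_zero
          · exact absurd (b10.symm.trans a14) one_ne_zero
        · rcases T2 with ⟨a84, b84, c84⟩ | ⟨a85, b85, c85⟩ | ⟨a86, b86, c86⟩
          · exact absurd (c11.symm.trans c84) one_ne_zero
          · exact absurd (c11.symm.trans c85) one_ne_zero
          · rcases T7 with ⟨a87, b87, c87⟩ | ⟨a88, b88, c88⟩ | ⟨a89, b89, c89⟩
            · exact absurd (a87.symm.trans b86) one_ne_zero
            · exact absurd (b88.symm.trans b0) one_ne_zero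
            · rcases T20 with ⟨a90, b90, c90⟩ | ⟨a91, b91, c91⟩ | ⟨a92, b92, c92⟩
              · exact absurd (c11.symm.trans c90) one_ne_zero
              · exact absurd (c11.symm.trans c91) one_ne_zero
              · rcases T30 with ⟨a93, b93, c93⟩ | ⟨a94, b94, c94⟩ | ⟨a95, b95, c95⟩
                · exact absurd (c11.symm.trans c93) one_ne_zero
                · exact absurd (c11.symm.trans c94) one_ne_zero
                · rcases T29 with ⟨a96, b96, c96⟩ | ⟨a97, b97, c97⟩ | ⟨a98, b98, c98⟩
                  · exact absurd (a96.symm.trans b95) one_ne_zero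
                  · exact absurd (b97.symm.trans b3) one_ne_zero
                  · rcases T3 with ⟨a99, b99, c99⟩ | ⟨a100, b100, c100⟩ | ⟨a101, b101, c101⟩
                    · exact absurd (a99.symm.trans b92) one_ne_zero
                    · rcases T38 with ⟨a102, b102, c102⟩ | ⟨a103, b103, c103⟩ | ⟨a104, b104, c104⟩
                      · rcases T15 with ⟨a105, b105, c105⟩ | ⟨a106, b106, c106⟩ | ⟨a107, b107, c107⟩
                        · rcases T10 with ⟨a108, b108, c108⟩ | ⟨a109, b109, c109⟩ | ⟨a110, b110, c110⟩
                          · exact absurd (a108.symm.trans b11) one_ne_zero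
                          · rcases T32 with ⟨a111, b111, c111⟩ | ⟨a112, b112, c112⟩ | ⟨a113, b113, c113⟩
                            · rcases T18 with ⟨a114, b114, c114⟩ | ⟨a115, b115, c115⟩ | ⟨a116, b116, c116⟩
                              · exact absurd (a114.symm.trans a95) one_ne_zero
                              · exact absurd (b115.symm.trans b111) one_ne_zero
                              · rcases T37 with ⟨a117, b117, c117⟩ | ⟨a118, b118, c118⟩ | ⟨a119, b119, c119⟩
                                · rcases T9 with ⟨a120, b120, c120⟩ | ⟨a121, b121, c121⟩ | ⟨a122, b122, c122⟩
                                  · exact absurd (a120.symm.trans a86) one_ne_zero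
                                  · exact absurd (b121.symm.trans b117) one_ne_zero
                                  · rcases T4 with ⟨a123, b123, c123⟩ | ⟨a124, b124, c124⟩ | ⟨a125, b125, c125⟩
                                    · exact absurd (a123.symm.trans b111) one_ne_zero
                                    · rcases T8 with ⟨a126, b126, c126⟩ | ⟨a127, b127, c127⟩ | ⟨a128, b128, c128⟩
                                      · exact absurd (a126.symm.trans a86) one_ne_zero
                                      · rcases T31 with ⟨a129, b129, c129⟩ | ⟨a130, b130, c130⟩ | ⟨a131, b131, c131⟩
                                        · exact absurd (a129.symm.trans a7) one_ne_zero
                                        · rcases T22 with ⟨a132, b132, c132⟩ | ⟨a133, b133, c133⟩ | ⟨a134, b134, c134⟩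
                                          · rcases T36 with ⟨a135, b135, c135⟩ | ⟨a136, b136, c136⟩ | ⟨a137, b137, c137⟩
                                            · exact absurd (a135.symm.trans a95) one_ne_zero
                                            · exact absurd (b136.symm.trans c132) one_ne_zero
                                            · rcases T19 with ⟨a138, b138, c138⟩ | ⟨a139, b139, c139⟩ | ⟨a140, b140, c140⟩
                                              · exact absurd (b124.symm.trans b138) one_ne_zero
                                              · rcases T26 with ⟨a141, b141, c141⟩ | ⟨a142, b142, c142⟩ | ⟨a143, b143, c143⟩
                                                · exact absurd (a141.symm.trans a139) one_ne_zero
                                                · exact absurd (b142.symm.trans c132) one_ne_zero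
                                                · rcases T33 with ⟨a144, b144, c144⟩ | ⟨a145, b145, c145⟩ | ⟨a146, b146, c146⟩
                                                  · exact absurd (a144.symm.trans b11) one_ne_zero
                                                  · exact absurd (b145.symm.trans a139) one_ne_zero
                                                  · rcases T28 with ⟨a147, b147, c147⟩ | ⟨a148, b148, c148⟩ | ⟨a149, b149, c149⟩
                                                    · exact absurd (a147.symm.trans c100) one_ne_zero
                                                    · rcases T27 with ⟨a150, b150, c150⟩ | ⟨a151, b151, c151⟩ | ⟨a152, b152, c152⟩
                                                      · exact absurd (c146.symm.trans b150) one_ne_zero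
                                                      · rcases T5 with ⟨a153, b153, c153⟩ | ⟨a154, b154, c154⟩ | ⟨a155, b155, c155⟩
                                                        · exact absurd (a153.symm.trans a151) one_ne_zero
                                                        · exact absurd (b154.symm.trans c7) one_ne_zero
                                                        · rcases T6 with ⟨a156, b156, c156⟩ | ⟨a157, b157, c157⟩ | ⟨a158, b158, c158⟩
                                                          · exact absurd (a156.symm.trans a92) one_ne_zero
                                                          · exact absurd (b157.symm.trans a151) one_ne_zero
                                                          · rcases T16 with ⟨a159, b159, c159⟩ | ⟨a160, b160, c160⟩ | ⟨a161, b161, c161⟩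
                                                            · rcases T12 with ⟨a162, b162, c162⟩ | ⟨a163, b163, c163⟩ | ⟨a164, b164, c164⟩
                                                              · rcases T17 with ⟨a165, b165, c165⟩ | ⟨a166, b166, c166⟩ | ⟨a167, b167, c167⟩
                                                                · exact absurd (a165.symm.trans c100) one_ne_zero
                                                                · exact absurd (b166.symm.trans b162) one_ne_zero
                                                                · rcases T39 with ⟨a168, b168, c168⟩ | ⟨a169, b169, c169⟩ | ⟨a170, b170, c170⟩
                                                                  · exact absurd (a168.symm.trans a7) one_ne_zero
                                                                  · rcases T14 with ⟨a171, b171, c171⟩ | ⟨a172, b172, c172⟩ | ⟨a173, b173, c173⟩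
                                                                    · rcases T11 with ⟨a174, b174, c174⟩ | ⟨a175, b175, c175⟩ | ⟨a176, b176, c176⟩
                                                                      · exact absurd (a174.symm.trans b171) one_ne_zero
                                                                      · rcases T13 with ⟨a177, b177, c177⟩ | ⟨a178, b178, c178⟩ | ⟨a179, b179, c179⟩
                                                                        · exact absurd (a177.symm.trans b86) one_ne_zero
                                                                        · exact absurd (b178.symm.trans b171) one_ne_zero
                                                                        · rcases T23 with ⟨a180, b180, c180⟩ | ⟨a181, b181, c181⟩ | ⟨a182, b182, c182⟩
                                                                          · exact absurd (a180.symm.trans b11) one_ne_zero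
                                                                          · exact absurd (b175.symm.trans c181) one_ne_zero
                                                                          · rcases T35 with ⟨a183, b183, c183⟩ | ⟨a184, b184, c184⟩ | ⟨a185, b185, c185⟩
                                                                            · rcases T25 with ⟨a186, b186, c186⟩ | ⟨a187, b187, c187⟩ | ⟨a188, b188, c188⟩
                                                                              · exact absurd (a183.symm.trans b186) one_ne_zero
                                                                              · exact absurd (b169.symm.trans a187) one_ne_zero
                                                                              · exact absurd (b169.symm.trans a188) one_ne_zero
                                                                            · exact absurd (b184.symm.trans b182) one_ne_zero
                                                                            · exact absurd (c185.symm.trans b0) one_ne_zero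
                                                                      · exact absurd (c176.symm.trans b3) one_ne_zero
                                                                    · exact absurd (b169.symm.trans a172) one_ne_zero
                                                                    · exact absurd (b169.symm.trans a173) one_ne_zero
                                                                  · exact absurd (c170.symm.trans b162) one_ne_zero
                                                              · exact absurd (c158.symm.trans a163) one_ne_zero
                                                              · exact absurd (c158.symm.trans a164) one_ne_zero
                                                            · exact absurd (c158.symm.trans a160) one_ne_zero
                                                            · exact absurd (c158.symm.trans a161) one_ne_zero
                                                      · exact absurd (c146.symm.trans b152) one_ne_zero
                                                    · exact absurd (c146.symm.trans b149) one_ne_zero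
                                              · exact absurd (b124.symm.trans b140) one_ne_zero
                                          · exact absurd (b130.symm.trans a133) one_ne_zero
                                          · exact absurd (b130.symm.trans a134) one_ne_zero
                                        · exact absurd (c131.symm.trans c124) one_ne_zero
                                      · exact absurd (b124.symm.trans b128) one_ne_zero
                                    · rcases T8 with ⟨a189, b189, c189⟩ | ⟨a190, b190, c190⟩ | ⟨a191, b191, c191⟩
                                      · exact absurd (a189.symm.trans a86) one_ne_zero
                                      · exact absurd (b190.symm.trans b125) one_ne_zero
                                      · rcases T31 with ⟨a192, b192, c192⟩ | ⟨a193, b193, c193⟩ | ⟨a194, b194, c194⟩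
                                        · exact absurd (a192.symm.trans a7) one_ne_zero
                                        · exact absurd (c125.symm.trans c193) one_ne_zero
                                        · rcases T22 with ⟨a195, b195, c195⟩ | ⟨a196, b196, c196⟩ | ⟨a197, b197, c197⟩
                                          · exact absurd (a195.symm.trans b194) one_ne_zero
                                          · exact absurd (b196.symm.trans b117) one_ne_zero
                                          · rcases T36 with ⟨a198, b198, c198⟩ | ⟨a199, b199, c199⟩ | ⟨a200, b200, c200⟩
                                            · exact absurd (a198.symm.trans a95) one_ne_zero
                                            · rcases T26 with ⟨a201, b201, c201⟩ | ⟨a202, b202, c202⟩ | ⟨a203, b203, c203⟩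
                                              · exact absurd (c197.symm.trans b201) one_ne_zero
                                              · rcases T19 with ⟨a204, b204, c204⟩ | ⟨a205, b205, c205⟩ | ⟨a206, b206, c206⟩
                                                · exact absurd (a204.symm.trans a202) one_ne_zero
                                                · exact absurd (b205.symm.trans b125) one_ne_zero
                                                · rcases T33 with ⟨a207, b207, c207⟩ | ⟨a208, b208, c208⟩ | ⟨a209, b209, c209⟩
                                                  · exact absurd (a207.symm.trans b11) one_ne_zero
                                                  · exact absurd (b208.symm.trans a202) one_ne_zero
                                                  · rcases T28 with ⟨a210, b210, c210⟩ | ⟨a211, b211, c211⟩ | ⟨a212, b212, c212⟩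
                                                    · exact absurd (a210.symm.trans c100) one_ne_zero
                                                    · rcases T27 with ⟨a213, b213, c213⟩ | ⟨a214, b214, c214⟩ | ⟨a215, b215, c215⟩
                                                      · exact absurd (c209.symm.trans b213) one_ne_zero
                                                      · rcases T5 with ⟨a216, b216, c216⟩ | ⟨a217, b217, c217⟩ | ⟨a218, b218, c218⟩
                                                        · exact absurd (a216.symm.trans a214) one_ne_zero
                                                        · exact absurd (b217.symm.trans c7) one_ne_zero
                                                        · rcases T6 with ⟨a219, b219, c219⟩ | ⟨a220, b220, c220⟩ | ⟨a221, b221, c221⟩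
                                                          · exact absurd (a219.symm.trans a92) one_ne_zero
                                                          · exact absurd (b220.symm.trans a214) one_ne_zero
                                                          · rcases T16 with ⟨a222, b222, c222⟩ | ⟨a223, b223, c223⟩ | ⟨a224, b224, c224⟩
                                                            · rcases T12 with ⟨a225, b225, c225⟩ | ⟨a226, b226, c226⟩ | ⟨a227, b227, c227⟩
                                                              · rcases T17 with ⟨a228, b228, c228⟩ | ⟨a229, b229, c229⟩ | ⟨a230, b230, c230⟩
                                                                · exact absurd (a228.symm.trans c100) one_ne_zero
                                                                · exact absurd (b229.symm.trans b225) one_ne_zero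
                                                                · rcases T39 with ⟨a231, b231, c231⟩ | ⟨a232, b232, c232⟩ | ⟨a233, b233, c233⟩
                                                                  · exact absurd (a231.symm.trans a7) one_ne_zero
                                                                  · rcases T14 with ⟨a234, b234, c234⟩ | ⟨a235, b235, c235⟩ | ⟨a236, b236, c236⟩
                                                                    · rcases T11 with ⟨a237, b237, c237⟩ | ⟨a238, b238, c238⟩ | ⟨a239, b239, c239⟩
                                                                      · exact absurd (a237.symm.trans b234) one_ne_zero
                                                                      · rcases T13 with ⟨a240, b240, c240⟩ | ⟨a241, b241, c241⟩ | ⟨a242, b242, c242⟩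
                                                                        · exact absurd (a240.symm.trans b86) one_ne_zero
                                                                        · exact absurd (b241.symm.trans b234) one_ne_zero
                                                                        · rcases T23 with ⟨a243, b243, c243⟩ | ⟨a244, b244, c244⟩ | ⟨a245, b245, c245⟩
                                                                          · exact absurd (a243.symm.trans b11) one_ne_zero
                                                                          · exact absurd (b238.symm.trans c244) one_ne_zero
                                                                          · rcases T35 with ⟨a246, b246, c246⟩ | ⟨a247, b247, c247⟩ | ⟨a248, b248, c248⟩
                                                                            · rcases T25 with ⟨a249, b249, c249⟩ | ⟨a250, b250, c250⟩ | ⟨a251, b251, c251⟩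
                                                                              · exact absurd (a246.symm.trans b249) one_ne_zero
                                                                              · exact absurd (b232.symm.trans a250) one_ne_zero
                                                                              · exact absurd (b232.symm.trans a251) one_ne_zero
                                                                            · exact absurd (b247.symm.trans b245) one_ne_zero
                                                                            · exact absurd (c248.symm.trans b0) one_ne_zero
                                                                      · exact absurd (c239.symm.trans b3) one_ne_zero
                                                                    · exact absurd (b232.symm.trans a235) one_ne_zero
                                                                    · exact absurd (b232.symm.trans a236) one_ne_zero
                                                                  · exact absurd (c233.symm.trans b225) one_ne_zero
                                                              · exact absurd (c221.symm.trans a226) one_ne_zero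
                                                              · exact absurd (c221.symm.trans a227) one_ne_zero
                                                            · exact absurd (c221.symm.trans a223) one_ne_zero
                                                            · exact absurd (c221.symm.trans a224) one_ne_zero
                                                      · exact absurd (c209.symm.trans b215) one_ne_zero
                                                    · exact absurd (c209.symm.trans b212) one_ne_zero
                                              · exact absurd (c197.symm.trans b203) one_ne_zero
                                            · exact absurd (c197.symm.trans b200) one_ne_zero
                                · exact absurd (b109.symm.trans a118) one_ne_zero
                                · exact absurd (b109.symm.trans a119) one_ne_zero
                            · exact absurd (b109.symm.trans a112) one_ne_zero
                            · exact absurd (b109.symm.trans a113) one_ne_zero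
                          · exact absurd (c110.symm.trans b105) one_ne_zero
                        · exact absurd (b100.symm.trans a106) one_ne_zero
                        · exact absurd (b100.symm.trans a107) one_ne_zero
                      · exact absurd (b100.symm.trans a103) one_ne_zero
                      · exact absurd (b100.symm.trans a104) one_ne_zero
                    · rcases T38 with ⟨a252, b252, c252⟩ | ⟨a253, b253, c253⟩ | ⟨a254, b254, c254⟩
                      · exact absurd (a252.symm.trans b101) one_ne_zero
                      · exact absurd (b253.symm.trans c7) one_ne_zero
                      · rcases T17 with ⟨a255, b255, c255⟩ | ⟨a256, b256, c256⟩ | ⟨a257, b257, c257⟩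
                        · rcases T39 with ⟨a258, b258, c258⟩ | ⟨a259, b259, c259⟩ | ⟨a260, b260, c260⟩
                          · exact absurd (a258.symm.trans a7) one_ne_zero
                          · rcases T14 with ⟨a261, b261, c261⟩ | ⟨a262, b262, c262⟩ | ⟨a263, b263, c263⟩
                            · rcases T11 with ⟨a264, b264, c264⟩ | ⟨a265, b265, c265⟩ | ⟨a266, b266, c266⟩
                              · exact absurd (a264.symm.trans b261) one_ne_zero
                              · rcases T13 with ⟨a267, b267, c267⟩ | ⟨a268, b268, c268⟩ | ⟨a269, b269, c269⟩
                                · exact absurd (a267.symm.trans b86) one_ne_zero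
                                · exact absurd (b268.symm.trans b261) one_ne_zero
                                · rcases T23 with ⟨a270, b270, c270⟩ | ⟨a271, b271, c271⟩ | ⟨a272, b272, c272⟩
                                  · exact absurd (a270.symm.trans b11) one_ne_zero
                                  · exact absurd (b265.symm.trans c271) one_ne_zero
                                  · rcases T35 with ⟨a273, b273, c273⟩ | ⟨a274, b274, c274⟩ | ⟨a275, b275, c275⟩
                                    · rcases T25 with ⟨a276, b276, c276⟩ | ⟨a277, b277, c277⟩ | ⟨a278, b278, c278⟩
                                      · exact absurd (a273.symm.trans b276) one_ne_zero
                                      · exact absurd (b259.symm.trans a277) one_ne_zero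
                                      · exact absurd (b259.symm.trans a278) one_ne_zero
                                    · exact absurd (b274.symm.trans b272) one_ne_zero
                                    · exact absurd (c275.symm.trans b0) one_ne_zero
                              · exact absurd (c266.symm.trans b3) one_ne_zero
                            · exact absurd (b259.symm.trans a262) one_ne_zero
                            · exact absurd (b259.symm.trans a263) one_ne_zero
                          · exact absurd (c260.symm.trans b255) one_ne_zero
                        · exact absurd (c101.symm.trans a256) one_ne_zero
                        · exact absurd (c101.symm.trans a257) one_ne_zero
      · exact absurd (a0.symm.trans b8) one_ne_zero
    · exact absurd (a0.symm.trans a4) one_ne_zero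
    · exact absurd (a0.symm.trans a5) one_ne_zero
  · rcases T7 with ⟨a279, b279, c279⟩ | ⟨a280, b280, c280⟩ | ⟨a281, b281, c281⟩
    · exact absurd (b1.symm.trans b279) one_ne_zero
    · rcases T35 with ⟨a282, b282, c282⟩ | ⟨a283, b283, c283⟩ | ⟨a284, b284, c284⟩
      · exact absurd (b1.symm.trans c282) one_ne_zero
      · exact absurd (b1.symm.trans c283) one_ne_zero
      · rcases T2 with ⟨a285, b285, c285⟩ | ⟨a286, b286, c286⟩ | ⟨a287, b287, c287⟩
        · rcases T8 with ⟨a288, b288, c288⟩ | ⟨a289, b289, c289⟩ | ⟨a290, b290, c290⟩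
          · rcases T9 with ⟨a291, b291, c291⟩ | ⟨a292, b292, c292⟩ | ⟨a293, b293, c293⟩
            · rcases T1 with ⟨a294, b294, c294⟩ | ⟨a295, b295, c295⟩ | ⟨a296, b296, c296⟩
              · rcases T23 with ⟨a297, b297, c297⟩ | ⟨a298, b298, c298⟩ | ⟨a299, b299, c299⟩
                · exact absurd (a297.symm.trans b294) one_ne_zero
                · exact absurd (b298.symm.trans b284) one_ne_zero
                · rcases T34 with ⟨a300, b300, c300⟩ | ⟨a301, b301, c301⟩ | ⟨a302, b302, c302⟩
                  · rcases T11 with ⟨a303, b303, c303⟩ | ⟨a304, b304, c304⟩ | ⟨a305, b305, c305⟩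
                    · exact absurd (c299.symm.trans b303) one_ne_zero
                    · rcases T13 with ⟨a306, b306, c306⟩ | ⟨a307, b307, c307⟩ | ⟨a308, b308, c308⟩
                      · exact absurd (a306.symm.trans a280) one_ne_zero
                      · exact absurd (b307.symm.trans a304) one_ne_zero
                      · rcases T24 with ⟨a309, b309, c309⟩ | ⟨a310, b310, c310⟩ | ⟨a311, b311, c311⟩
                        · exact absurd (a309.symm.trans a1) one_ne_zero
                        · exact absurd (b310.symm.trans c304) one_ne_zero
                        · rcases T31 with ⟨a312, b312, c312⟩ | ⟨a313, b313, c313⟩ | ⟨a314, b314, c314⟩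
                          · rcases T4 with ⟨a315, b315, c315⟩ | ⟨a316, b316, c316⟩ | ⟨a317, b317, c317⟩
                            · rcases T22 with ⟨a318, b318, c318⟩ | ⟨a319, b319, c319⟩ | ⟨a320, b320, c320⟩
                              · exact absurd (a318.symm.trans b312) one_ne_zero
                              · exact absurd (b319.symm.trans b291) one_ne_zero
                              · rcases T18 with ⟨a321, b321, c321⟩ | ⟨a322, b322, c322⟩ | ⟨a323, b323, c323⟩
                                · exact absurd (a315.symm.trans b321) one_ne_zero
                                · rcases T30 with ⟨a324, b324, c324⟩ | ⟨a325, b325, c325⟩ | ⟨a326, b326, c326⟩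
                                  · exact absurd (a324.symm.trans a322) one_ne_zero
                                  · rcases T21 with ⟨a327, b327, c327⟩ | ⟨a328, b328, c328⟩ | ⟨a329, b329, c329⟩
                                    · rcases T29 with ⟨a330, b330, c330⟩ | ⟨a331, b331, c331⟩ | ⟨a332, b332, c332⟩
                                      · rcases T36 with ⟨a333, b333, c333⟩ | ⟨a334, b334, c334⟩ | ⟨a335, b335, c335⟩
                                        · exact absurd (a333.symm.trans a322) one_ne_zero
                                        · rcases T26 with ⟨a336, b336, c336⟩ | ⟨a337, b337, c337⟩ | ⟨a338, b338, c338⟩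
                                          · exact absurd (c320.symm.trans b336) one_ne_zero
                                          · rcases T19 with ⟨a339, b339, c339⟩ | ⟨a340, b340, c340⟩ | ⟨a341, b341, c341⟩
                                            · exact absurd (a339.symm.trans a337) one_ne_zero
                                            · exact absurd (b340.symm.trans b288) one_ne_zero
                                            · rcases T33 with ⟨a342, b342, c342⟩ | ⟨a343, b343, c343⟩ | ⟨a344, b344, c344⟩
                                              · exact absurd (a342.symm.trans b294) one_ne_zero
                                              · exact absurd (b343.symm.trans a337) one_ne_zero
                                              · rcases T27 with ⟨a345, b345, c345⟩ | ⟨a346, b346, c346⟩ | ⟨a347, b347, c347⟩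
                                                · exact absurd (c344.symm.trans b345) one_ne_zero
                                                · rcases T5 with ⟨a348, b348, c348⟩ | ⟨a349, b349, c349⟩ | ⟨a350, b350, c350⟩
                                                  · exact absurd (a348.symm.trans a346) one_ne_zero
                                                  · exact absurd (b349.symm.trans c300) one_ne_zero
                                                  · rcases T28 with ⟨a351, b351, c351⟩ | ⟨a352, b352, c352⟩ | ⟨a353, b353, c353⟩
                                                    · exact absurd (c344.symm.trans b351) one_ne_zero
                                                    · rcases T32 with ⟨a354, b354, c354⟩ | ⟨a355, b355, c355⟩ | ⟨a356, b356, c356⟩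
                                                      · exact absurd (a315.symm.trans b354) one_ne_zero
                                                      · rcases T10 with ⟨a357, b357, c357⟩ | ⟨a358, b358, c358⟩ | ⟨a359, b359, c359⟩
                                                        · exact absurd (a357.symm.trans b294) one_ne_zero
                                                        · exact absurd (b358.symm.trans a355) one_ne_zero
                                                        · rcases T37 with ⟨a360, b360, c360⟩ | ⟨a361, b361, c361⟩ | ⟨a362, b362, c362⟩
                                                          · exact absurd (a360.symm.trans a355) one_ne_zero
                                                          · exact absurd (b361.symm.trans b291) one_ne_zero
                                                          · rcases T15 with ⟨a363, b363, c363⟩ | ⟨a364, b364, c364⟩ | ⟨a365, b365, c365⟩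
                                                            · exact absurd (c359.symm.trans b363) one_ne_zero
                                                            · rcases T3 with ⟨a366, b366, c366⟩ | ⟨a367, b367, c367⟩ | ⟨a368, b368, c368⟩
                                                              · rcases T20 with ⟨a369, b369, c369⟩ | ⟨a370, b370, c370⟩ | ⟨a371, b371, c371⟩
                                                                · exact absurd (a366.symm.trans b369) one_ne_zero
                                                                · rcases T6 with ⟨a372, b372, c372⟩ | ⟨a373, b373, c373⟩ | ⟨a374, b374, c374⟩
                                                                  · exact absurd (a372.symm.trans a370) one_ne_zero
                                                                  · exact absurd (b373.symm.trans a346) one_ne_zero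
                                                                  · rcases T16 with ⟨a375, b375, c375⟩ | ⟨a376, b376, c376⟩ | ⟨a377, b377, c377⟩
                                                                    · exact absurd (c359.symm.trans b375) one_ne_zero
                                                                    · exact absurd (c374.symm.trans a376) one_ne_zero
                                                                    · exact absurd (c374.symm.trans a377) one_ne_zero
                                                                · exact absurd (a366.symm.trans b371) one_ne_zero
                                                              · exact absurd (b367.symm.trans a364) one_ne_zero
                                                              · exact absurd (c368.symm.trans a352) one_ne_zero
                                                            · exact absurd (c359.symm.trans b365) one_ne_zero
                                                      · exact absurd (a315.symm.trans b356) one_ne_zero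
                                                    · exact absurd (c344.symm.trans b353) one_ne_zero
                                                · exact absurd (c344.symm.trans b347) one_ne_zero
                                          · exact absurd (c320.symm.trans b338) one_ne_zero
                                        · exact absurd (c320.symm.trans b335) one_ne_zero
                                      · exact absurd (b325.symm.trans a331) one_ne_zero
                                      · exact absurd (b325.symm.trans a332) one_ne_zero
                                    · exact absurd (b325.symm.trans a328) one_ne_zero
                                    · exact absurd (b325.symm.trans a329) one_ne_zero
                                  · exact absurd (c326.symm.trans c285) one_ne_zero
                                · exact absurd (a315.symm.trans b323) one_ne_zero
                            · exact absurd (b316.symm.trans b288) one_ne_zero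
                            · exact absurd (c317.symm.trans c312) one_ne_zero
                          · exact absurd (a294.symm.trans a313) one_ne_zero
                          · exact absurd (a294.symm.trans a314) one_ne_zero
                    · exact absurd (c299.symm.trans b305) one_ne_zero
                  · exact absurd (a294.symm.trans a301) one_ne_zero
                  · exact absurd (a294.symm.trans a302) one_ne_zero
              · rcases T23 with ⟨a378, b378, c378⟩ | ⟨a379, b379, c379⟩ | ⟨a380, b380, c380⟩
                · rcases T34 with ⟨a381, b381, c381⟩ | ⟨a382, b382, c382⟩ | ⟨a383, b383, c383⟩
                  · exact absurd (a381.symm.trans a295) one_ne_zero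
                  · exact absurd (b382.symm.trans a1) one_ne_zero
                  · rcases T5 with ⟨a384, b384, c384⟩ | ⟨a385, b385, c385⟩ | ⟨a386, b386, c386⟩
                    · exact absurd (c383.symm.trans b384) one_ne_zero
                    · rcases T10 with ⟨a387, b387, c387⟩ | ⟨a388, b388, c388⟩ | ⟨a389, b389, c389⟩
                      · rcases T37 with ⟨a390, b390, c390⟩ | ⟨a391, b391, c391⟩ | ⟨a392, b392, c392⟩
                        · exact absurd (a390.symm.trans b387) one_ne_zero
                        · exact absurd (b391.symm.trans b291) one_ne_zero
                        · rcases T33 with ⟨a393, b393, c393⟩ | ⟨a394, b394, c394⟩ | ⟨a395, b395, c395⟩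
                          · rcases T19 with ⟨a396, b396, c396⟩ | ⟨a397, b397, c397⟩ | ⟨a398, b398, c398⟩
                            · exact absurd (a396.symm.trans b393) one_ne_zero
                            · exact absurd (b397.symm.trans b288) one_ne_zero
                            · rcases T27 with ⟨a399, b399, c399⟩ | ⟨a400, b400, c400⟩ | ⟨a401, b401, c401⟩
                              · exact absurd (a399.symm.trans a385) one_ne_zero
                              · exact absurd (b400.symm.trans c393) one_ne_zero
                              · rcases T38 with ⟨a402, b402, c402⟩ | ⟨a403, b403, c403⟩ | ⟨a404, b404, c404⟩
                                · exact absurd (c383.symm.trans b402) one_ne_zero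
                                · rcases T15 with ⟨a405, b405, c405⟩ | ⟨a406, b406, c406⟩ | ⟨a407, b407, c407⟩
                                  · exact absurd (a405.symm.trans a403) one_ne_zero
                                  · exact absurd (b406.symm.trans c387) one_ne_zero
                                  · rcases T3 with ⟨a408, b408, c408⟩ | ⟨a409, b409, c409⟩ | ⟨a410, b410, c410⟩
                                    · rcases T20 with ⟨a411, b411, c411⟩ | ⟨a412, b412, c412⟩ | ⟨a413, b413, c413⟩
                                      · exact absurd (a408.symm.trans b411) one_ne_zero
                                      · rcases T6 with ⟨a414, b414, c414⟩ | ⟨a415, b415, c415⟩ | ⟨a416, b416, c416⟩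
                                        · exact absurd (a414.symm.trans a412) one_ne_zero
                                        · exact absurd (b415.symm.trans a385) one_ne_zero
                                        · rcases T16 with ⟨a417, b417, c417⟩ | ⟨a418, b418, c418⟩ | ⟨a419, b419, c419⟩
                                          · rcases T28 with ⟨a420, b420, c420⟩ | ⟨a421, b421, c421⟩ | ⟨a422, b422, c422⟩
                                            · exact absurd (a420.symm.trans c408) one_ne_zero
                                            · exact absurd (b421.symm.trans c393) one_ne_zero
                                            · rcases T12 with ⟨a423, b423, c423⟩ | ⟨a424, b424, c424⟩ | ⟨a425, b425, c425⟩
                                              · rcases T17 with ⟨a426, b426, c426⟩ | ⟨a427, b427, c427⟩ | ⟨a428, b428, c428⟩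
                                                · exact absurd (a426.symm.trans c408) one_ne_zero
                                                · exact absurd (b427.symm.trans b423) one_ne_zero
                                                · rcases T39 with ⟨a429, b429, c429⟩ | ⟨a430, b430, c430⟩ | ⟨a431, b431, c431⟩
                                                  · exact absurd (a429.symm.trans a295) one_ne_zero
                                                  · rcases T25 with ⟨a432, b432, c432⟩ | ⟨a433, b433, c433⟩ | ⟨a434, b434, c434⟩
                                                    · rcases T14 with ⟨a435, b435, c435⟩ | ⟨a436, b436, c436⟩ | ⟨a437, b437, c437⟩
                                                      · rcases T11 with ⟨a438, b438, c438⟩ | ⟨a439, b439, c439⟩ | ⟨a440, b440, c440⟩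
                                                        · exact absurd (a438.symm.trans b435) one_ne_zero
                                                        · exact absurd (b439.symm.trans c378) one_ne_zero
                                                        · rcases T13 with ⟨a441, b441, c441⟩ | ⟨a442, b442, c442⟩ | ⟨a443, b443, c443⟩
                                                          · exact absurd (a441.symm.trans a280) one_ne_zero
                                                          · exact absurd (b442.symm.trans b435) one_ne_zero
                                                          · rcases T24 with ⟨a444, b444, c444⟩ | ⟨a445, b445, c445⟩ | ⟨a446, b446, c446⟩
                                                            · exact absurd (a444.symm.trans a1) one_ne_zero
                                                            · rcases T29 with ⟨a447, b447, c447⟩ | ⟨a448, b448, c448⟩ | ⟨a449, b449, c449⟩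
                                                              · exact absurd (c440.symm.trans b447) one_ne_zero
                                                              · rcases T21 with ⟨a450, b450, c450⟩ | ⟨a451, b451, c451⟩ | ⟨a452, b452, c452⟩
                                                                · exact absurd (a450.symm.trans a448) one_ne_zero
                                                                · exact absurd (b451.symm.trans a284) one_ne_zero
                                                                · rcases T30 with ⟨a453, b453, c453⟩ | ⟨a454, b454, c454⟩ | ⟨a455, b455, c455⟩
                                                                  · rcases T18 with ⟨a456, b456, c456⟩ | ⟨a457, b457, c457⟩ | ⟨a458, b458, c458⟩
                                                                    · rcases T4 with ⟨a459, b459, c459⟩ | ⟨a460, b460, c460⟩ | ⟨a461, b461, c461⟩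
                                                                      · exact absurd (a459.symm.trans b456) one_ne_zero
                                                                      · exact absurd (b460.symm.trans b288) one_ne_zero
                                                                      · rcases T31 with ⟨a462, b462, c462⟩ | ⟨a463, b463, c463⟩ | ⟨a464, b464, c464⟩
                                                                        · exact absurd (a462.symm.trans a295) one_ne_zero
                                                                        · exact absurd (c461.symm.trans c463) one_ne_zero
                                                                        · rcases T22 with ⟨a465, b465, c465⟩ | ⟨a466, b466, c466⟩ | ⟨a467, b467, c467⟩
                                                                          · exact absurd (a465.symm.trans b464) one_ne_zero
                                                                          · exact absurd (b466.symm.trans b291) one_ne_zero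
                                                                          · rcases T36 with ⟨a468, b468, c468⟩ | ⟨a469, b469, c469⟩ | ⟨a470, b470, c470⟩
                                                                            · exact absurd (c467.symm.trans b468) one_ne_zero
                                                                            · exact absurd (a453.symm.trans a469) one_ne_zero
                                                                            · exact absurd (a453.symm.trans a470) one_ne_zero
                                                                    · exact absurd (a453.symm.trans a457) one_ne_zero
                                                                    · exact absurd (a453.symm.trans a458) one_ne_zero
                                                                  · exact absurd (b454.symm.trans a448) one_ne_zero
                                                                  · exact absurd (c455.symm.trans c285) one_ne_zero
                                                              · exact absurd (c440.symm.trans b449) one_ne_zero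
                                                            · exact absurd (c440.symm.trans b446) one_ne_zero
                                                      · exact absurd (b430.symm.trans a436) one_ne_zero
                                                      · exact absurd (b430.symm.trans a437) one_ne_zero
                                                    · exact absurd (b430.symm.trans a433) one_ne_zero
                                                    · exact absurd (b430.symm.trans a434) one_ne_zero
                                                  · exact absurd (c431.symm.trans b423) one_ne_zero
                                              · exact absurd (c416.symm.trans a424) one_ne_zero
                                              · exact absurd (c416.symm.trans a425) one_ne_zero
                                          · exact absurd (c416.symm.trans a418) one_ne_zero
                                          · exact absurd (c416.symm.trans a419) one_ne_zero
                                      · exact absurd (a408.symm.trans b413) one_ne_zero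
                                    · exact absurd (b409.symm.trans a403) one_ne_zero
                                    · rcases T20 with ⟨a471, b471, c471⟩ | ⟨a472, b472, c472⟩ | ⟨a473, b473, c473⟩
                                      · rcases T6 with ⟨a474, b474, c474⟩ | ⟨a475, b475, c475⟩ | ⟨a476, b476, c476⟩
                                        · rcases T16 with ⟨a477, b477, c477⟩ | ⟨a478, b478, c478⟩ | ⟨a479, b479, c479⟩
                                          · exact absurd (a477.symm.trans c474) one_ne_zero
                                          · exact absurd (b478.symm.trans c387) one_ne_zero
                                          · rcases T28 with ⟨a480, b480, c480⟩ | ⟨a481, b481, c481⟩ | ⟨a482, b482, c482⟩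
                                            · rcases T17 with ⟨a483, b483, c483⟩ | ⟨a484, b484, c484⟩ | ⟨a485, b485, c485⟩
                                              · rcases T12 with ⟨a486, b486, c486⟩ | ⟨a487, b487, c487⟩ | ⟨a488, b488, c488⟩
                                                · exact absurd (a486.symm.trans c474) one_ne_zero
                                                · exact absurd (b487.symm.trans b483) one_ne_zero
                                                · rcases T39 with ⟨a489, b489, c489⟩ | ⟨a490, b490, c490⟩ | ⟨a491, b491, c491⟩
                                                  · exact absurd (a489.symm.trans a295) one_ne_zero
                                                  · rcases T25 with ⟨a492, b492, c492⟩ | ⟨a493, b493, c493⟩ | ⟨a494, b494, c494⟩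
                                                    · rcases T14 with ⟨a495, b495, c495⟩ | ⟨a496, b496, c496⟩ | ⟨a497, b497, c497⟩
                                                      · rcases T11 with ⟨a498, b498, c498⟩ | ⟨a499, b499, c499⟩ | ⟨a500, b500, c500⟩
                                                        · exact absurd (a498.symm.trans b495) one_ne_zero
                                                        · exact absurd (b499.symm.trans c378) one_ne_zero
                                                        · rcases T13 with ⟨a501, b501, c501⟩ | ⟨a502, b502, c502⟩ | ⟨a503, b503, c503⟩
                                                          · exact absurd (a501.symm.trans a280) one_ne_zero
                                                          · exact absurd (b502.symm.trans b495) one_ne_zero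
                                                          · rcases T24 with ⟨a504, b504, c504⟩ | ⟨a505, b505, c505⟩ | ⟨a506, b506, c506⟩
                                                            · exact absurd (a504.symm.trans a1) one_ne_zero
                                                            · rcases T29 with ⟨a507, b507, c507⟩ | ⟨a508, b508, c508⟩ | ⟨a509, b509, c509⟩
                                                              · exact absurd (c500.symm.trans b507) one_ne_zero
                                                              · rcases T21 with ⟨a510, b510, c510⟩ | ⟨a511, b511, c511⟩ | ⟨a512, b512, c512⟩
                                                                · exact absurd (a510.symm.trans a508) one_ne_zero
                                                                · exact absurd (b511.symm.trans a284) one_ne_zero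
                                                                · rcases T30 with ⟨a513, b513, c513⟩ | ⟨a514, b514, c514⟩ | ⟨a515, b515, c515⟩
                                                                  · rcases T18 with ⟨a516, b516, c516⟩ | ⟨a517, b517, c517⟩ | ⟨a518, b518, c518⟩
                                                                    · rcases T4 with ⟨a519, b519, c519⟩ | ⟨a520, b520, c520⟩ | ⟨a521, b521, c521⟩
                                                                      · exact absurd (a519.symm.trans b516) one_ne_zero
                                                                      · exact absurd (b520.symm.trans b288) one_ne_zero
                                                                      · rcases T31 with ⟨a522, b522, c522⟩ | ⟨a523, b523, c523⟩ | ⟨a524, b524, c524⟩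
                                                                        · exact absurd (a522.symm.trans a295) one_ne_zero
                                                                        · exact absurd (c521.symm.trans c523) one_ne_zero
                                                                        · rcases T22 with ⟨a525, b525, c525⟩ | ⟨a526, b526, c526⟩ | ⟨a527, b527, c527⟩
                                                                          · exact absurd (a525.symm.trans b524) one_ne_zero
                                                                          · exact absurd (b526.symm.trans b291) one_ne_zero
                                                                          · rcases T36 with ⟨a528, b528, c528⟩ | ⟨a529, b529, c529⟩ | ⟨a530, b530, c530⟩
                                                                            · exact absurd (c527.symm.trans b528) one_ne_zero
                                                                            · exact absurd (a513.symm.trans a529) one_ne_zero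
                                                                            · exact absurd (a513.symm.trans a530) one_ne_zero
                                                                    · exact absurd (a513.symm.trans a517) one_ne_zero
                                                                    · exact absurd (a513.symm.trans a518) one_ne_zero
                                                                  · exact absurd (b514.symm.trans a508) one_ne_zero
                                                                  · exact absurd (c515.symm.trans c285) one_ne_zero
                                                              · exact absurd (c500.symm.trans b509) one_ne_zero
                                                            · exact absurd (c500.symm.trans b506) one_ne_zero
                                                      · exact absurd (b490.symm.trans a496) one_ne_zero
                                                      · exact absurd (b490.symm.trans a497) one_ne_zero
                                                    · exact absurd (b490.symm.trans a493) one_ne_zero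
                                                    · exact absurd (b490.symm.trans a494) one_ne_zero
                                                  · exact absurd (c491.symm.trans b483) one_ne_zero
                                              · exact absurd (c410.symm.trans a484) one_ne_zero
                                              · exact absurd (c410.symm.trans a485) one_ne_zero
                                            · exact absurd (c410.symm.trans a481) one_ne_zero
                                            · exact absurd (c410.symm.trans a482) one_ne_zero
                                        · exact absurd (a471.symm.trans a475) one_ne_zero
                                        · exact absurd (a471.symm.trans a476) one_ne_zero
                                      · exact absurd (b472.symm.trans a410) one_ne_zero
                                      · exact absurd (c473.symm.trans c285) one_ne_zero
                                · exact absurd (c383.symm.trans b404) one_ne_zero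
                          · exact absurd (b295.symm.trans a394) one_ne_zero
                          · exact absurd (b295.symm.trans a395) one_ne_zero
                      · exact absurd (b295.symm.trans a388) one_ne_zero
                      · exact absurd (b295.symm.trans a389) one_ne_zero
                    · exact absurd (c383.symm.trans b386) one_ne_zero
                · exact absurd (b295.symm.trans a379) one_ne_zero
                · exact absurd (b295.symm.trans a380) one_ne_zero
              · exact absurd (c296.symm.trans c285) one_ne_zero
            · exact absurd (a285.symm.trans a292) one_ne_zero
            · exact absurd (a285.symm.trans a293) one_ne_zero
          · exact absurd (a285.symm.trans a289) one_ne_zero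
          · exact absurd (a285.symm.trans a290) one_ne_zero
        · exact absurd (b286.symm.trans a280) one_ne_zero
        · rcases T1 with ⟨a531, b531, c531⟩ | ⟨a532, b532, c532⟩ | ⟨a533, b533, c533⟩
          · exact absurd (c287.symm.trans c531) one_ne_zero
          · exact absurd (c287.symm.trans c532) one_ne_zero
          · rcases T23 with ⟨a534, b534, c534⟩ | ⟨a535, b535, c535⟩ | ⟨a536, b536, c536⟩
            · exact absurd (a534.symm.trans b533) one_ne_zero
            · exact absurd (b535.symm.trans b284) one_ne_zero
            · rcases T34 with ⟨a537, b537, c537⟩ | ⟨a538, b538, c538⟩ | ⟨a539, b539, c539⟩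
              · exact absurd (a537.symm.trans a533) one_ne_zero
              · exact absurd (b538.symm.trans a1) one_ne_zero
              · rcases T5 with ⟨a540, b540, c540⟩ | ⟨a541, b541, c541⟩ | ⟨a542, b542, c542⟩
                · exact absurd (c539.symm.trans b540) one_ne_zero
                · rcases T11 with ⟨a543, b543, c543⟩ | ⟨a544, b544, c544⟩ | ⟨a545, b545, c545⟩
                  · exact absurd (c536.symm.trans b543) one_ne_zero
                  · rcases T13 with ⟨a546, b546, c546⟩ | ⟨a547, b547, c547⟩ | ⟨a548, b548, c548⟩
                    · exact absurd (a546.symm.trans a280) one_ne_zero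
                    · exact absurd (b547.symm.trans a544) one_ne_zero
                    · rcases T24 with ⟨a549, b549, c549⟩ | ⟨a550, b550, c550⟩ | ⟨a551, b551, c551⟩
                      · exact absurd (a549.symm.trans a1) one_ne_zero
                      · exact absurd (b550.symm.trans c544) one_ne_zero
                      · rcases T20 with ⟨a552, b552, c552⟩ | ⟨a553, b553, c553⟩ | ⟨a554, b554, c554⟩
                        · exact absurd (c287.symm.trans c552) one_ne_zero
                        · exact absurd (c287.symm.trans c553) one_ne_zero
                        · rcases T6 with ⟨a555, b555, c555⟩ | ⟨a556, b556, c556⟩ | ⟨a557, b557, c557⟩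
                          · exact absurd (a555.symm.trans a554) one_ne_zero
                          · exact absurd (b556.symm.trans a541) one_ne_zero
                          · rcases T12 with ⟨a558, b558, c558⟩ | ⟨a559, b559, c559⟩ | ⟨a560, b560, c560⟩
                            · rcases T39 with ⟨a561, b561, c561⟩ | ⟨a562, b562, c562⟩ | ⟨a563, b563, c563⟩
                              · exact absurd (a561.symm.trans a533) one_ne_zero
                              · rcases T14 with ⟨a564, b564, c564⟩ | ⟨a565, b565, c565⟩ | ⟨a566, b566, c566⟩
                                · rcases T25 with ⟨a567, b567, c567⟩ | ⟨a568, b568, c568⟩ | ⟨a569, b569, c569⟩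
                                  · rcases T16 with ⟨a570, b570, c570⟩ | ⟨a571, b571, c571⟩ | ⟨a572, b572, c572⟩
                                    · rcases T10 with ⟨a573, b573, c573⟩ | ⟨a574, b574, c574⟩ | ⟨a575, b575, c575⟩
                                      · exact absurd (a573.symm.trans b533) one_ne_zero
                                      · rcases T30 with ⟨a576, b576, c576⟩ | ⟨a577, b577, c577⟩ | ⟨a578, b578, c578⟩
                                        · exact absurd (c287.symm.trans c576) one_ne_zero
                                        · exact absurd (c287.symm.trans c577) one_ne_zero
                                        · rcases T21 with ⟨a579, b579, c579⟩ | ⟨a580, b580, c580⟩ | ⟨a581, b581, c581⟩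
                                          · exact absurd (a579.symm.trans b578) one_ne_zero
                                          · exact absurd (b580.symm.trans a284) one_ne_zero
                                          · rcases T29 with ⟨a582, b582, c582⟩ | ⟨a583, b583, c583⟩ | ⟨a584, b584, c584⟩
                                            · exact absurd (a582.symm.trans b578) one_ne_zero
                                            · exact absurd (b583.symm.trans c544) one_ne_zero
                                            · rcases T32 with ⟨a585, b585, c585⟩ | ⟨a586, b586, c586⟩ | ⟨a587, b587, c587⟩
                                              · rcases T18 with ⟨a588, b588, c588⟩ | ⟨a589, b589, c589⟩ | ⟨a590, b590, c590⟩
                                                · exact absurd (a588.symm.trans a578) one_ne_zero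
                                                · exact absurd (b589.symm.trans b585) one_ne_zero
                                                · rcases T37 with ⟨a591, b591, c591⟩ | ⟨a592, b592, c592⟩ | ⟨a593, b593, c593⟩
                                                  · rcases T9 with ⟨a594, b594, c594⟩ | ⟨a595, b595, c595⟩ | ⟨a596, b596, c596⟩
                                                    · exact absurd (a594.symm.trans a287) one_ne_zero
                                                    · exact absurd (b595.symm.trans b591) one_ne_zero
                                                    · rcases T38 with ⟨a597, b597, c597⟩ | ⟨a598, b598, c598⟩ | ⟨a599, b599, c599⟩
                                                      · exact absurd (c539.symm.trans b597) one_ne_zero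
                                                      · rcases T3 with ⟨a600, b600, c600⟩ | ⟨a601, b601, c601⟩ | ⟨a602, b602, c602⟩
                                                        · exact absurd (a600.symm.trans b554) one_ne_zero
                                                        · exact absurd (b601.symm.trans a598) one_ne_zero
                                                        · rcases T15 with ⟨a603, b603, c603⟩ | ⟨a604, b604, c604⟩ | ⟨a605, b605, c605⟩
                                                          · exact absurd (a603.symm.trans a598) one_ne_zero
                                                          · exact absurd (b604.symm.trans b570) one_ne_zero
                                                          · rcases T17 with ⟨a606, b606, c606⟩ | ⟨a607, b607, c607⟩ | ⟨a608, b608, c608⟩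
                                                            · rcases T28 with ⟨a609, b609, c609⟩ | ⟨a610, b610, c610⟩ | ⟨a611, b611, c611⟩
                                                              · rcases T27 with ⟨a612, b612, c612⟩ | ⟨a613, b613, c613⟩ | ⟨a614, b614, c614⟩
                                                                · exact absurd (a612.symm.trans a541) one_ne_zero
                                                                · exact absurd (b613.symm.trans b609) one_ne_zero
                                                                · rcases T33 with ⟨a615, b615, c615⟩ | ⟨a616, b616, c616⟩ | ⟨a617, b617, c617⟩
                                                                  · exact absurd (a615.symm.trans b533) one_ne_zero
                                                                  · rcases T19 with ⟨a618, b618, c618⟩ | ⟨a619, b619, c619⟩ | ⟨a620, b620, c620⟩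
                                                                    · rcases T4 with ⟨a621, b621, c621⟩ | ⟨a622, b622, c622⟩ | ⟨a623, b623, c623⟩
                                                                      · exact absurd (a621.symm.trans b585) one_ne_zero
                                                                      · exact absurd (b622.symm.trans b618) one_ne_zero
                                                                      · rcases T8 with ⟨a624, b624, c624⟩ | ⟨a625, b625, c625⟩ | ⟨a626, b626, c626⟩
                                                                        · exact absurd (a624.symm.trans a287) one_ne_zero
                                                                        · exact absurd (b625.symm.trans b618) one_ne_zero
                                                                        · rcases T31 with ⟨a627, b627, c627⟩ | ⟨a628, b628, c628⟩ | ⟨a629, b629, c629⟩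
                                                                          · exact absurd (a627.symm.trans a533) one_ne_zero
                                                                          · exact absurd (c623.symm.trans c628) one_ne_zero
                                                                          · rcases T22 with ⟨a630, b630, c630⟩ | ⟨a631, b631, c631⟩ | ⟨a632, b632, c632⟩
                                                                            · exact absurd (a630.symm.trans b629) one_ne_zero
                                                                            · exact absurd (b631.symm.trans b591) one_ne_zero
                                                                            · rcases T26 with ⟨a633, b633, c633⟩ | ⟨a634, b634, c634⟩ | ⟨a635, b635, c635⟩
                                                                              · exact absurd (c632.symm.trans b633) one_ne_zero
                                                                              · exact absurd (b616.symm.trans a634) one_ne_zero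
                                                                              · exact absurd (b616.symm.trans a635) one_ne_zero
                                                                    · exact absurd (b616.symm.trans a619) one_ne_zero
                                                                    · exact absurd (b616.symm.trans a620) one_ne_zero
                                                                  · exact absurd (c617.symm.trans b609) one_ne_zero
                                                              · exact absurd (c602.symm.trans a610) one_ne_zero
                                                              · exact absurd (c602.symm.trans a611) one_ne_zero
                                                            · exact absurd (c602.symm.trans a607) one_ne_zero
                                                            · exact absurd (c602.symm.trans a608) one_ne_zero
                                                      · exact absurd (c539.symm.trans b599) one_ne_zero
                                                  · exact absurd (b574.symm.trans a592) one_ne_zero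
                                                  · exact absurd (b574.symm.trans a593) one_ne_zero
                                              · exact absurd (b574.symm.trans a586) one_ne_zero
                                              · exact absurd (b574.symm.trans a587) one_ne_zero
                                      · exact absurd (c575.symm.trans b570) one_ne_zero
                                    · exact absurd (c557.symm.trans a571) one_ne_zero
                                    · exact absurd (c557.symm.trans a572) one_ne_zero
                                  · exact absurd (b562.symm.trans a568) one_ne_zero
                                  · exact absurd (b562.symm.trans a569) one_ne_zero
                                · exact absurd (b562.symm.trans a565) one_ne_zero
                                · exact absurd (b562.symm.trans a566) one_ne_zero
                              · exact absurd (c563.symm.trans b558) one_ne_zero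
                            · exact absurd (c557.symm.trans a559) one_ne_zero
                            · exact absurd (c557.symm.trans a560) one_ne_zero
                  · exact absurd (c536.symm.trans b545) one_ne_zero
                · exact absurd (c539.symm.trans b542) one_ne_zero
    · exact absurd (b1.symm.trans b281) one_ne_zero
  · rcases T7 with ⟨a636, b636, c636⟩ | ⟨a637, b637, c637⟩ | ⟨a638, b638, c638⟩
    · rcases T2 with ⟨a639, b639, c639⟩ | ⟨a640, b640, c640⟩ | ⟨a641, b641, c641⟩
      · exact absurd (a636.symm.trans b639) one_ne_zero
      · rcases T13 with ⟨a642, b642, c642⟩ | ⟨a643, b643, c643⟩ | ⟨a644, b644, c644⟩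
        · rcases T1 with ⟨a645, b645, c645⟩ | ⟨a646, b646, c646⟩ | ⟨a647, b647, c647⟩
          · rcases T34 with ⟨a648, b648, c648⟩ | ⟨a649, b649, c649⟩ | ⟨a650, b650, c650⟩
            · rcases T31 with ⟨a651, b651, c651⟩ | ⟨a652, b652, c652⟩ | ⟨a653, b653, c653⟩
              · rcases T39 with ⟨a654, b654, c654⟩ | ⟨a655, b655, c655⟩ | ⟨a656, b656, c656⟩
                · rcases T14 with ⟨a657, b657, c657⟩ | ⟨a658, b658, c658⟩ | ⟨a659, b659, c659⟩
                  · exact absurd (a657.symm.trans b654) one_ne_zero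
                  · exact absurd (b658.symm.trans b642) one_ne_zero
                  · rcases T4 with ⟨a660, b660, c660⟩ | ⟨a661, b661, c661⟩ | ⟨a662, b662, c662⟩
                    · rcases T8 with ⟨a663, b663, c663⟩ | ⟨a664, b664, c664⟩ | ⟨a665, b665, c665⟩
                      · exact absurd (a663.symm.trans a640) one_ne_zero
                      · exact absurd (b664.symm.trans b660) one_ne_zero
                      · rcases T18 with ⟨a666, b666, c666⟩ | ⟨a667, b667, c667⟩ | ⟨a668, b668, c668⟩
                        · exact absurd (a660.symm.trans b666) one_ne_zero
                        · rcases T30 with ⟨a669, b669, c669⟩ | ⟨a670, b670, c670⟩ | ⟨a671, b671, c671⟩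
                          · exact absurd (a669.symm.trans a667) one_ne_zero
                          · rcases T21 with ⟨a672, b672, c672⟩ | ⟨a673, b673, c673⟩ | ⟨a674, b674, c674⟩
                            · rcases T25 with ⟨a675, b675, c675⟩ | ⟨a676, b676, c676⟩ | ⟨a677, b677, c677⟩
                              · exact absurd (a675.symm.trans b654) one_ne_zero
                              · exact absurd (b676.symm.trans b672) one_ne_zero
                              · rcases T35 with ⟨a678, b678, c678⟩ | ⟨a679, b679, c679⟩ | ⟨a680, b680, c680⟩
                                · exact absurd (a678.symm.trans b672) one_ne_zero
                                · rcases T23 with ⟨a681, b681, c681⟩ | ⟨a682, b682, c682⟩ | ⟨a683, b683, c683⟩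
                                  · exact absurd (a681.symm.trans b645) one_ne_zero
                                  · rcases T11 with ⟨a684, b684, c684⟩ | ⟨a685, b685, c685⟩ | ⟨a686, b686, c686⟩
                                    · exact absurd (a684.symm.trans b642) one_ne_zero
                                    · exact absurd (b685.symm.trans c682) one_ne_zero
                                    · rcases T29 with ⟨a687, b687, c687⟩ | ⟨a688, b688, c688⟩ | ⟨a689, b689, c689⟩
                                      · exact absurd (c686.symm.trans b687) one_ne_zero
                                      · exact absurd (b670.symm.trans a688) one_ne_zero
                                      · exact absurd (b670.symm.trans a689) one_ne_zero
                                  · exact absurd (b679.symm.trans b683) one_ne_zero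
                                · exact absurd (c680.symm.trans b2) one_ne_zero
                            · exact absurd (b670.symm.trans a673) one_ne_zero
                            · exact absurd (b670.symm.trans a674) one_ne_zero
                          · exact absurd (c671.symm.trans c640) one_ne_zero
                        · exact absurd (a660.symm.trans b668) one_ne_zero
                    · rcases T8 with ⟨a690, b690, c690⟩ | ⟨a691, b691, c691⟩ | ⟨a692, b692, c692⟩
                      · exact absurd (a690.symm.trans a640) one_ne_zero
                      · rcases T19 with ⟨a693, b693, c693⟩ | ⟨a694, b694, c694⟩ | ⟨a695, b695, c695⟩
                        · exact absurd (b661.symm.trans b693) one_ne_zero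
                        · rcases T33 with ⟨a696, b696, c696⟩ | ⟨a697, b697, c697⟩ | ⟨a698, b698, c698⟩
                          · exact absurd (a696.symm.trans b645) one_ne_zero
                          · exact absurd (b697.symm.trans a694) one_ne_zero
                          · rcases T27 with ⟨a699, b699, c699⟩ | ⟨a700, b700, c700⟩ | ⟨a701, b701, c701⟩
                            · exact absurd (c698.symm.trans b699) one_ne_zero
                            · rcases T5 with ⟨a702, b702, c702⟩ | ⟨a703, b703, c703⟩ | ⟨a704, b704, c704⟩
                              · exact absurd (a702.symm.trans a700) one_ne_zero
                              · exact absurd (b703.symm.trans c648) one_ne_zero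
                              · rcases T28 with ⟨a705, b705, c705⟩ | ⟨a706, b706, c706⟩ | ⟨a707, b707, c707⟩
                                · exact absurd (c698.symm.trans b705) one_ne_zero
                                · rcases T17 with ⟨a708, b708, c708⟩ | ⟨a709, b709, c709⟩ | ⟨a710, b710, c710⟩
                                  · exact absurd (a708.symm.trans a706) one_ne_zero
                                  · exact absurd (b709.symm.trans c654) one_ne_zero
                                  · rcases T3 with ⟨a711, b711, c711⟩ | ⟨a712, b712, c712⟩ | ⟨a713, b713, c713⟩
                                    · rcases T20 with ⟨a714, b714, c714⟩ | ⟨a715, b715, c715⟩ | ⟨a716, b716, c716⟩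
                                      · exact absurd (a711.symm.trans b714) one_ne_zero
                                      · rcases T6 with ⟨a717, b717, c717⟩ | ⟨a718, b718, c718⟩ | ⟨a719, b719, c719⟩
                                        · exact absurd (a717.symm.trans a715) one_ne_zero
                                        · exact absurd (b718.symm.trans a700) one_ne_zero
                                        · rcases T12 with ⟨a720, b720, c720⟩ | ⟨a721, b721, c721⟩ | ⟨a722, b722, c722⟩
                                          · rcases T38 with ⟨a723, b723, c723⟩ | ⟨a724, b724, c724⟩ | ⟨a725, b725, c725⟩
                                            · exact absurd (a723.symm.trans b711) one_ne_zero
                                            · exact absurd (b724.symm.trans c648) one_ne_zero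
                                            · rcases T16 with ⟨a726, b726, c726⟩ | ⟨a727, b727, c727⟩ | ⟨a728, b728, c728⟩
                                              · rcases T10 with ⟨a729, b729, c729⟩ | ⟨a730, b730, c730⟩ | ⟨a731, b731, c731⟩
                                                · exact absurd (a729.symm.trans b645) one_ne_zero
                                                · rcases T15 with ⟨a732, b732, c732⟩ | ⟨a733, b733, c733⟩ | ⟨a734, b734, c734⟩
                                                  · exact absurd (a732.symm.trans b711) one_ne_zero
                                                  · exact absurd (b733.symm.trans b726) one_ne_zero
                                                  · rcases T32 with ⟨a735, b735, c735⟩ | ⟨a736, b736, c736⟩ | ⟨a737, b737, c737⟩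
                                                    · rcases T37 with ⟨a738, b738, c738⟩ | ⟨a739, b739, c739⟩ | ⟨a740, b740, c740⟩
                                                      · rcases T9 with ⟨a741, b741, c741⟩ | ⟨a742, b742, c742⟩ | ⟨a743, b743, c743⟩
                                                        · exact absurd (a741.symm.trans a640) one_ne_zero
                                                        · exact absurd (b742.symm.trans b738) one_ne_zero
                                                        · rcases T22 with ⟨a744, b744, c744⟩ | ⟨a745, b745, c745⟩ | ⟨a746, b746, c746⟩
                                                          · exact absurd (a744.symm.trans b651) one_ne_zero
                                                          · exact absurd (b745.symm.trans b738) one_ne_zero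
                                                          · rcases T26 with ⟨a747, b747, c747⟩ | ⟨a748, b748, c748⟩ | ⟨a749, b749, c749⟩
                                                            · exact absurd (a747.symm.trans a694) one_ne_zero
                                                            · rcases T36 with ⟨a750, b750, c750⟩ | ⟨a751, b751, c751⟩ | ⟨a752, b752, c752⟩
                                                              · exact absurd (c746.symm.trans b750) one_ne_zero
                                                              · rcases T18 with ⟨a753, b753, c753⟩ | ⟨a754, b754, c754⟩ | ⟨a755, b755, c755⟩
                                                                · exact absurd (a753.symm.trans a751) one_ne_zero
                                                                · exact absurd (b754.symm.trans a661) one_ne_zero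
                                                                · rcases T30 with ⟨a756, b756, c756⟩ | ⟨a757, b757, c757⟩ | ⟨a758, b758, c758⟩
                                                                  · exact absurd (a756.symm.trans a751) one_ne_zero
                                                                  · rcases T21 with ⟨a759, b759, c759⟩ | ⟨a760, b760, c760⟩ | ⟨a761, b761, c761⟩
                                                                    · rcases T25 with ⟨a762, b762, c762⟩ | ⟨a763, b763, c763⟩ | ⟨a764, b764, c764⟩
                                                                      · exact absurd (a762.symm.trans b654) one_ne_zero
                                                                      · exact absurd (b763.symm.trans b759) one_ne_zero
                                                                      · rcases T35 with ⟨a765, b765, c765⟩ | ⟨a766, b766, c766⟩ | ⟨a767, b767, c767⟩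
                                                                        · exact absurd (a765.symm.trans b759) one_ne_zero
                                                                        · rcases T23 with ⟨a768, b768, c768⟩ | ⟨a769, b769, c769⟩ | ⟨a770, b770, c770⟩
                                                                          · exact absurd (a768.symm.trans b645) one_ne_zero
                                                                          · rcases T11 with ⟨a771, b771, c771⟩ | ⟨a772, b772, c772⟩ | ⟨a773, b773, c773⟩
                                                                            · exact absurd (a771.symm.trans b642) one_ne_zero
                                                                            · exact absurd (b772.symm.trans c769) one_ne_zero
                                                                            · rcases T29 with ⟨a774, b774, c774⟩ | ⟨a775, b775, c775⟩ | ⟨a776, b776, c776⟩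
                                                                              · exact absurd (c773.symm.trans b774) one_ne_zero
                                                                              · exact absurd (b757.symm.trans a775) one_ne_zero
                                                                              · exact absurd (b757.symm.trans a776) one_ne_zero
                                                                          · exact absurd (b766.symm.trans b770) one_ne_zero
                                                                        · exact absurd (c767.symm.trans b2) one_ne_zero
                                                                    · exact absurd (b757.symm.trans a760) one_ne_zero
                                                                    · exact absurd (b757.symm.trans a761) one_ne_zero
                                                                  · exact absurd (c758.symm.trans c640) one_ne_zero
                                                              · exact absurd (c746.symm.trans b752) one_ne_zero
                                                            · exact absurd (c746.symm.trans b749) one_ne_zero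
                                                      · exact absurd (b730.symm.trans a739) one_ne_zero
                                                      · exact absurd (b730.symm.trans a740) one_ne_zero
                                                    · exact absurd (b730.symm.trans a736) one_ne_zero
                                                    · exact absurd (b730.symm.trans a737) one_ne_zero
                                                · exact absurd (c731.symm.trans b726) one_ne_zero
                                              · exact absurd (c719.symm.trans a727) one_ne_zero
                                              · exact absurd (c719.symm.trans a728) one_ne_zero
                                          · exact absurd (c719.symm.trans a721) one_ne_zero
                                          · exact absurd (c719.symm.trans a722) one_ne_zero
                                      · exact absurd (a711.symm.trans b716) one_ne_zero
                                    · rcases T20 with ⟨a777, b777, c777⟩ | ⟨a778, b778, c778⟩ | ⟨a779, b779, c779⟩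
                                      · rcases T6 with ⟨a780, b780, c780⟩ | ⟨a781, b781, c781⟩ | ⟨a782, b782, c782⟩
                                        · rcases T12 with ⟨a783, b783, c783⟩ | ⟨a784, b784, c784⟩ | ⟨a785, b785, c785⟩
                                          · exact absurd (a783.symm.trans c780) one_ne_zero
                                          · exact absurd (b784.symm.trans c654) one_ne_zero
                                          · rcases T38 with ⟨a786, b786, c786⟩ | ⟨a787, b787, c787⟩ | ⟨a788, b788, c788⟩
                                            · rcases T15 with ⟨a789, b789, c789⟩ | ⟨a790, b790, c790⟩ | ⟨a791, b791, c791⟩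
                                              · rcases T10 with ⟨a792, b792, c792⟩ | ⟨a793, b793, c793⟩ | ⟨a794, b794, c794⟩
                                                · exact absurd (a792.symm.trans b645) one_ne_zero
                                                · rcases T16 with ⟨a795, b795, c795⟩ | ⟨a796, b796, c796⟩ | ⟨a797, b797, c797⟩
                                                  · exact absurd (a795.symm.trans c780) one_ne_zero
                                                  · exact absurd (b796.symm.trans b789) one_ne_zero
                                                  · rcases T32 with ⟨a798, b798, c798⟩ | ⟨a799, b799, c799⟩ | ⟨a800, b800, c800⟩
                                                    · rcases T37 with ⟨a801, b801, c801⟩ | ⟨a802, b802, c802⟩ | ⟨a803, b803, c803⟩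
                                                      · rcases T9 with ⟨a804, b804, c804⟩ | ⟨a805, b805, c805⟩ | ⟨a806, b806, c806⟩
                                                        · exact absurd (a804.symm.trans a640) one_ne_zero
                                                        · exact absurd (b805.symm.trans b801) one_ne_zero
                                                        · rcases T22 with ⟨a807, b807, c807⟩ | ⟨a808, b808, c808⟩ | ⟨a809, b809, c809⟩
                                                          · exact absurd (a807.symm.trans b651) one_ne_zero
                                                          · exact absurd (b808.symm.trans b801) one_ne_zero
                                                          · rcases T26 with ⟨a810, b810, c810⟩ | ⟨a811, b811, c811⟩ | ⟨a812, b812, c812⟩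
                                                            · exact absurd (a810.symm.trans a694) one_ne_zero
                                                            · rcases T36 with ⟨a813, b813, c813⟩ | ⟨a814, b814, c814⟩ | ⟨a815, b815, c815⟩
                                                              · exact absurd (c809.symm.trans b813) one_ne_zero
                                                              · rcases T18 with ⟨a816, b816, c816⟩ | ⟨a817, b817, c817⟩ | ⟨a818, b818, c818⟩
                                                                · exact absurd (a816.symm.trans a814) one_ne_zero
                                                                · exact absurd (b817.symm.trans a661) one_ne_zero
                                                                · rcases T30 with ⟨a819, b819, c819⟩ | ⟨a820, b820, c820⟩ | ⟨a821, b821, c821⟩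
                                                                  · exact absurd (a819.symm.trans a814) one_ne_zero
                                                                  · rcases T21 with ⟨a822, b822, c822⟩ | ⟨a823, b823, c823⟩ | ⟨a824, b824, c824⟩
                                                                    · rcases T25 with ⟨a825, b825, c825⟩ | ⟨a826, b826, c826⟩ | ⟨a827, b827, c827⟩
                                                                      · exact absurd (a825.symm.trans b654) one_ne_zero
                                                                      · exact absurd (b826.symm.trans b822) one_ne_zero
                                                                      · rcases T35 with ⟨a828, b828, c828⟩ | ⟨a829, b829, c829⟩ | ⟨a830, b830, c830⟩
                                                                        · exact absurd (a828.symm.trans b822) one_ne_zero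
                                                                        · rcases T23 with ⟨a831, b831, c831⟩ | ⟨a832, b832, c832⟩ | ⟨a833, b833, c833⟩
                                                                          · exact absurd (a831.symm.trans b645) one_ne_zero
                                                                          · rcases T11 with ⟨a834, b834, c834⟩ | ⟨a835, b835, c835⟩ | ⟨a836, b836, c836⟩
                                                                            · exact absurd (a834.symm.trans b642) one_ne_zero
                                                                            · exact absurd (b835.symm.trans c832) one_ne_zero
                                                                            · rcases T29 with ⟨a837, b837, c837⟩ | ⟨a838, b838, c838⟩ | ⟨a839, b839, c839⟩
                                                                              · exact absurd (c836.symm.trans b837) one_ne_zero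
                                                                              · exact absurd (b820.symm.trans a838) one_ne_zero
                                                                              · exact absurd (b820.symm.trans a839) one_ne_zero
                                                                          · exact absurd (b829.symm.trans b833) one_ne_zero
                                                                        · exact absurd (c830.symm.trans b2) one_ne_zero
                                                                    · exact absurd (b820.symm.trans a823) one_ne_zero
                                                                    · exact absurd (b820.symm.trans a824) one_ne_zero
                                                                  · exact absurd (c821.symm.trans c640) one_ne_zero
                                                              · exact absurd (c809.symm.trans b815) one_ne_zero
                                                            · exact absurd (c809.symm.trans b812) one_ne_zero
                                                      · exact absurd (b793.symm.trans a802) one_ne_zero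
                                                      · exact absurd (b793.symm.trans a803) one_ne_zero
                                                    · exact absurd (b793.symm.trans a799) one_ne_zero
                                                    · exact absurd (b793.symm.trans a800) one_ne_zero
                                                · exact absurd (c794.symm.trans b789) one_ne_zero
                                              · exact absurd (b712.symm.trans a790) one_ne_zero
                                              · exact absurd (b712.symm.trans a791) one_ne_zero
                                            · exact absurd (b712.symm.trans a787) one_ne_zero
                                            · exact absurd (b712.symm.trans a788) one_ne_zero
                                        · exact absurd (a777.symm.trans a781) one_ne_zero
                                        · exact absurd (a777.symm.trans a782) one_ne_zero
                                      · exact absurd (b778.symm.trans a712) one_ne_zero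
                                      · exact absurd (c779.symm.trans c640) one_ne_zero
                                    · exact absurd (c713.symm.trans a706) one_ne_zero
                                · exact absurd (c698.symm.trans b707) one_ne_zero
                            · exact absurd (c698.symm.trans b701) one_ne_zero
                        · exact absurd (b661.symm.trans b695) one_ne_zero
                      · exact absurd (b661.symm.trans b692) one_ne_zero
                    · exact absurd (c662.symm.trans c651) one_ne_zero
                · exact absurd (a645.symm.trans a655) one_ne_zero
                · exact absurd (a645.symm.trans a656) one_ne_zero
              · exact absurd (a645.symm.trans a652) one_ne_zero
              · exact absurd (a645.symm.trans a653) one_ne_zero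
            · exact absurd (a645.symm.trans a649) one_ne_zero
            · exact absurd (a645.symm.trans a650) one_ne_zero
          · rcases T34 with ⟨a840, b840, c840⟩ | ⟨a841, b841, c841⟩ | ⟨a842, b842, c842⟩
            · exact absurd (a840.symm.trans a646) one_ne_zero
            · exact absurd (b841.symm.trans a2) one_ne_zero
            · rcases T5 with ⟨a843, b843, c843⟩ | ⟨a844, b844, c844⟩ | ⟨a845, b845, c845⟩
              · exact absurd (c842.symm.trans b843) one_ne_zero
              · rcases T10 with ⟨a846, b846, c846⟩ | ⟨a847, b847, c847⟩ | ⟨a848, b848, c848⟩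
                · rcases T23 with ⟨a849, b849, c849⟩ | ⟨a850, b850, c850⟩ | ⟨a851, b851, c851⟩
                  · rcases T11 with ⟨a852, b852, c852⟩ | ⟨a853, b853, c853⟩ | ⟨a854, b854, c854⟩
                    · exact absurd (a852.symm.trans b642) one_ne_zero
                    · exact absurd (b853.symm.trans c849) one_ne_zero
                    · rcases T24 with ⟨a855, b855, c855⟩ | ⟨a856, b856, c856⟩ | ⟨a857, b857, c857⟩
                      · exact absurd (a855.symm.trans a2) one_ne_zero
                      · rcases T35 with ⟨a858, b858, c858⟩ | ⟨a859, b859, c859⟩ | ⟨a860, b860, c860⟩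
                        · rcases T21 with ⟨a861, b861, c861⟩ | ⟨a862, b862, c862⟩ | ⟨a863, b863, c863⟩
                          · exact absurd (a858.symm.trans b861) one_ne_zero
                          · rcases T29 with ⟨a864, b864, c864⟩ | ⟨a865, b865, c865⟩ | ⟨a866, b866, c866⟩
                            · exact absurd (a864.symm.trans a862) one_ne_zero
                            · rcases T30 with ⟨a867, b867, c867⟩ | ⟨a868, b868, c868⟩ | ⟨a869, b869, c869⟩
                              · rcases T18 with ⟨a870, b870, c870⟩ | ⟨a871, b871, c871⟩ | ⟨a872, b872, c872⟩
                                · rcases T32 with ⟨a873, b873, c873⟩ | ⟨a874, b874, c874⟩ | ⟨a875, b875, c875⟩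
                                  · exact absurd (a873.symm.trans b846) one_ne_zero
                                  · exact absurd (b874.symm.trans b870) one_ne_zero
                                  · rcases T25 with ⟨a876, b876, c876⟩ | ⟨a877, b877, c877⟩ | ⟨a878, b878, c878⟩
                                    · exact absurd (a858.symm.trans b876) one_ne_zero
                                    · rcases T14 with ⟨a879, b879, c879⟩ | ⟨a880, b880, c880⟩ | ⟨a881, b881, c881⟩
                                      · exact absurd (a879.symm.trans a877) one_ne_zero
                                      · exact absurd (b880.symm.trans b642) one_ne_zero
                                      · rcases T39 with ⟨a882, b882, c882⟩ | ⟨a883, b883, c883⟩ | ⟨a884, b884, c884⟩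
                                        · exact absurd (a882.symm.trans a646) one_ne_zero
                                        · exact absurd (b883.symm.trans a877) one_ne_zero
                                        · rcases T12 with ⟨a885, b885, c885⟩ | ⟨a886, b886, c886⟩ | ⟨a887, b887, c887⟩
                                          · exact absurd (c884.symm.trans b885) one_ne_zero
                                          · rcases T6 with ⟨a888, b888, c888⟩ | ⟨a889, b889, c889⟩ | ⟨a890, b890, c890⟩
                                            · rcases T16 with ⟨a891, b891, c891⟩ | ⟨a892, b892, c892⟩ | ⟨a893, b893, c893⟩
                                              · exact absurd (a891.symm.trans a886) one_ne_zero
                                              · exact absurd (b892.symm.trans c846) one_ne_zero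
                                              · rcases T20 with ⟨a894, b894, c894⟩ | ⟨a895, b895, c895⟩ | ⟨a896, b896, c896⟩
                                                · rcases T17 with ⟨a897, b897, c897⟩ | ⟨a898, b898, c898⟩ | ⟨a899, b899, c899⟩
                                                  · exact absurd (c884.symm.trans b897) one_ne_zero
                                                  · rcases T3 with ⟨a900, b900, c900⟩ | ⟨a901, b901, c901⟩ | ⟨a902, b902, c902⟩
                                                    · exact absurd (a900.symm.trans b894) one_ne_zero
                                                    · rcases T38 with ⟨a903, b903, c903⟩ | ⟨a904, b904, c904⟩ | ⟨a905, b905, c905⟩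
                                                      · exact absurd (c842.symm.trans b903) one_ne_zero
                                                      · exact absurd (b901.symm.trans a904) one_ne_zero
                                                      · exact absurd (b901.symm.trans a905) one_ne_zero
                                                    · exact absurd (c902.symm.trans a898) one_ne_zero
                                                  · exact absurd (c884.symm.trans b899) one_ne_zero
                                                · exact absurd (a888.symm.trans a895) one_ne_zero
                                                · exact absurd (a888.symm.trans a896) one_ne_zero
                                            · exact absurd (b889.symm.trans a844) one_ne_zero
                                            · exact absurd (c890.symm.trans a886) one_ne_zero
                                          · exact absurd (c884.symm.trans b887) one_ne_zero
                                    · exact absurd (a858.symm.trans b878) one_ne_zero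
                                · exact absurd (a867.symm.trans a871) one_ne_zero
                                · exact absurd (a867.symm.trans a872) one_ne_zero
                              · exact absurd (b868.symm.trans a862) one_ne_zero
                              · exact absurd (c869.symm.trans c640) one_ne_zero
                            · exact absurd (c854.symm.trans b866) one_ne_zero
                          · exact absurd (a858.symm.trans b863) one_ne_zero
                        · exact absurd (b859.symm.trans b849) one_ne_zero
                        · exact absurd (c860.symm.trans b2) one_ne_zero
                      · exact absurd (c854.symm.trans b857) one_ne_zero
                  · exact absurd (b646.symm.trans a850) one_ne_zero
                  · exact absurd (b646.symm.trans a851) one_ne_zero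
                · exact absurd (b646.symm.trans a847) one_ne_zero
                · exact absurd (b646.symm.trans a848) one_ne_zero
              · exact absurd (c842.symm.trans b845) one_ne_zero
          · exact absurd (c647.symm.trans c640) one_ne_zero
        · exact absurd (a636.symm.trans a643) one_ne_zero
        · exact absurd (a636.symm.trans a644) one_ne_zero
      · exact absurd (a636.symm.trans b641) one_ne_zero
    · exact absurd (b637.symm.trans b2) one_ne_zero
    · rcases T2 with ⟨a906, b906, c906⟩ | ⟨a907, b907, c907⟩ | ⟨a908, b908, c908⟩
      · rcases T8 with ⟨a909, b909, c909⟩ | ⟨a910, b910, c910⟩ | ⟨a911, b911, c911⟩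
        · rcases T9 with ⟨a912, b912, c912⟩ | ⟨a913, b913, c913⟩ | ⟨a914, b914, c914⟩
          · rcases T1 with ⟨a915, b915, c915⟩ | ⟨a916, b916, c916⟩ | ⟨a917, b917, c917⟩
            · rcases T34 with ⟨a918, b918, c918⟩ | ⟨a919, b919, c919⟩ | ⟨a920, b920, c920⟩
              · rcases T31 with ⟨a921, b921, c921⟩ | ⟨a922, b922, c922⟩ | ⟨a923, b923, c923⟩
                · rcases T4 with ⟨a924, b924, c924⟩ | ⟨a925, b925, c925⟩ | ⟨a926, b926, c926⟩
                  · rcases T22 with ⟨a927, b927, c927⟩ | ⟨a928, b928, c928⟩ | ⟨a929, b929, c929⟩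
                    · exact absurd (a927.symm.trans b921) one_ne_zero
                    · exact absurd (b928.symm.trans b912) one_ne_zero
                    · rcases T18 with ⟨a930, b930, c930⟩ | ⟨a931, b931, c931⟩ | ⟨a932, b932, c932⟩
                      · exact absurd (a924.symm.trans b930) one_ne_zero
                      · rcases T30 with ⟨a933, b933, c933⟩ | ⟨a934, b934, c934⟩ | ⟨a935, b935, c935⟩
                        · exact absurd (a933.symm.trans a931) one_ne_zero
                        · rcases T36 with ⟨a936, b936, c936⟩ | ⟨a937, b937, c937⟩ | ⟨a938, b938, c938⟩
                          · exact absurd (a936.symm.trans a931) one_ne_zero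
                          · rcases T21 with ⟨a939, b939, c939⟩ | ⟨a940, b940, c940⟩ | ⟨a941, b941, c941⟩
                            · rcases T35 with ⟨a942, b942, c942⟩ | ⟨a943, b943, c943⟩ | ⟨a944, b944, c944⟩
                              · exact absurd (a942.symm.trans b939) one_ne_zero
                              · rcases T23 with ⟨a945, b945, c945⟩ | ⟨a946, b946, c946⟩ | ⟨a947, b947, c947⟩
                                · exact absurd (a945.symm.trans b915) one_ne_zero
                                · rcases T26 with ⟨a948, b948, c948⟩ | ⟨a949, b949, c949⟩ | ⟨a950, b950, c950⟩
                                  · exact absurd (c929.symm.trans b948) one_ne_zero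
                                  · rcases T19 with ⟨a951, b951, c951⟩ | ⟨a952, b952, c952⟩ | ⟨a953, b953, c953⟩
                                    · exact absurd (a951.symm.trans a949) one_ne_zero
                                    · exact absurd (b952.symm.trans b909) one_ne_zero
                                    · rcases T33 with ⟨a954, b954, c954⟩ | ⟨a955, b955, c955⟩ | ⟨a956, b956, c956⟩
                                      · exact absurd (a954.symm.trans b915) one_ne_zero
                                      · exact absurd (b955.symm.trans a949) one_ne_zero
                                      · rcases T27 with ⟨a957, b957, c957⟩ | ⟨a958, b958, c958⟩ | ⟨a959, b959, c959⟩
                                        · exact absurd (c956.symm.trans b957) one_ne_zero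
                                        · rcases T5 with ⟨a960, b960, c960⟩ | ⟨a961, b961, c961⟩ | ⟨a962, b962, c962⟩
                                          · exact absurd (a960.symm.trans a958) one_ne_zero
                                          · exact absurd (b961.symm.trans c918) one_ne_zero
                                          · rcases T28 with ⟨a963, b963, c963⟩ | ⟨a964, b964, c964⟩ | ⟨a965, b965, c965⟩
                                            · exact absurd (c956.symm.trans b963) one_ne_zero
                                            · rcases T29 with ⟨a966, b966, c966⟩ | ⟨a967, b967, c967⟩ | ⟨a968, b968, c968⟩
                                              · rcases T11 with ⟨a969, b969, c969⟩ | ⟨a970, b970, c970⟩ | ⟨a971, b971, c971⟩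
                                                · rcases T13 with ⟨a972, b972, c972⟩ | ⟨a973, b973, c973⟩ | ⟨a974, b974, c974⟩
                                                  · exact absurd (a972.symm.trans a638) one_ne_zero
                                                  · rcases T24 with ⟨a975, b975, c975⟩ | ⟨a976, b976, c976⟩ | ⟨a977, b977, c977⟩
                                                    · exact absurd (a975.symm.trans a2) one_ne_zero
                                                    · exact absurd (b976.symm.trans b966) one_ne_zero
                                                    · rcases T14 with ⟨a978, b978, c978⟩ | ⟨a979, b979, c979⟩ | ⟨a980, b980, c980⟩
                                                      · exact absurd (a969.symm.trans b978) one_ne_zero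
                                                      · rcases T25 with ⟨a981, b981, c981⟩ | ⟨a982, b982, c982⟩ | ⟨a983, b983, c983⟩
                                                        · exact absurd (a981.symm.trans a979) one_ne_zero
                                                        · exact absurd (b982.symm.trans b939) one_ne_zero
                                                        · rcases T39 with ⟨a984, b984, c984⟩ | ⟨a985, b985, c985⟩ | ⟨a986, b986, c986⟩
                                                          · rcases T17 with ⟨a987, b987, c987⟩ | ⟨a988, b988, c988⟩ | ⟨a989, b989, c989⟩
                                                            · exact absurd (a987.symm.trans a964) one_ne_zero
                                                            · exact absurd (b988.symm.trans c984) one_ne_zero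
                                                            · rcases T32 with ⟨a990, b990, c990⟩ | ⟨a991, b991, c991⟩ | ⟨a992, b992, c992⟩
                                                              · exact absurd (a924.symm.trans b990) one_ne_zero
                                                              · rcases T10 with ⟨a993, b993, c993⟩ | ⟨a994, b994, c994⟩ | ⟨a995, b995, c995⟩
                                                                · exact absurd (a993.symm.trans b915) one_ne_zero
                                                                · exact absurd (b994.symm.trans a991) one_ne_zero
                                                                · rcases T37 with ⟨a996, b996, c996⟩ | ⟨a997, b997, c997⟩ | ⟨a998, b998, c998⟩
                                                                  · exact absurd (a996.symm.trans a991) one_ne_zero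
                                                                  · exact absurd (b997.symm.trans b912) one_ne_zero
                                                                  · rcases T15 with ⟨a999, b999, c999⟩ | ⟨a1000, b1000, c1000⟩ | ⟨a1001, b1001, c1001⟩
                                                                    · exact absurd (c995.symm.trans b999) one_ne_zero
                                                                    · rcases T3 with ⟨a1002, b1002, c1002⟩ | ⟨a1003, b1003, c1003⟩ | ⟨a1004, b1004, c1004⟩
                                                                      · rcases T20 with ⟨a1005, b1005, c1005⟩ | ⟨a1006, b1006, c1006⟩ | ⟨a1007, b1007, c1007⟩
                                                                        · exact absurd (a1002.symm.trans b1005) one_ne_zero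
                                                                        · rcases T6 with ⟨a1008, b1008, c1008⟩ | ⟨a1009, b1009, c1009⟩ | ⟨a1010, b1010, c1010⟩
                                                                          · exact absurd (a1008.symm.trans a1006) one_ne_zero
                                                                          · exact absurd (b1009.symm.trans a958) one_ne_zero
                                                                          · rcases T16 with ⟨a1011, b1011, c1011⟩ | ⟨a1012, b1012, c1012⟩ | ⟨a1013, b1013, c1013⟩
                                                                            · exact absurd (c995.symm.trans b1011) one_ne_zero
                                                                            · exact absurd (c1010.symm.trans a1012) one_ne_zero
                                                                            · exact absurd (c1010.symm.trans a1013) one_ne_zero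
                                                                        · exact absurd (a1002.symm.trans b1007) one_ne_zero
                                                                      · exact absurd (b1003.symm.trans a1000) one_ne_zero
                                                                      · exact absurd (c1004.symm.trans a964) one_ne_zero
                                                                    · exact absurd (c995.symm.trans b1001) one_ne_zero
                                                              · exact absurd (a924.symm.trans b992) one_ne_zero
                                                          · exact absurd (a915.symm.trans a985) one_ne_zero
                                                          · exact absurd (a915.symm.trans a986) one_ne_zero
                                                      · exact absurd (a969.symm.trans b980) one_ne_zero
                                                  · exact absurd (a969.symm.trans b974) one_ne_zero
                                                · exact absurd (b970.symm.trans c946) one_ne_zero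
                                                · exact absurd (c971.symm.trans b966) one_ne_zero
                                              · exact absurd (b934.symm.trans a967) one_ne_zero
                                              · exact absurd (b934.symm.trans a968) one_ne_zero
                                            · exact absurd (c956.symm.trans b965) one_ne_zero
                                        · exact absurd (c956.symm.trans b959) one_ne_zero
                                  · exact absurd (c929.symm.trans b950) one_ne_zero
                                · exact absurd (b943.symm.trans b947) one_ne_zero
                              · exact absurd (c944.symm.trans b2) one_ne_zero
                            · exact absurd (b934.symm.trans a940) one_ne_zero
                            · exact absurd (b934.symm.trans a941) one_ne_zero
                          · exact absurd (c929.symm.trans b938) one_ne_zero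
                        · exact absurd (c935.symm.trans c906) one_ne_zero
                      · exact absurd (a924.symm.trans b932) one_ne_zero
                  · exact absurd (b925.symm.trans b909) one_ne_zero
                  · exact absurd (c926.symm.trans c921) one_ne_zero
                · exact absurd (a915.symm.trans a922) one_ne_zero
                · exact absurd (a915.symm.trans a923) one_ne_zero
              · exact absurd (a915.symm.trans a919) one_ne_zero
              · exact absurd (a915.symm.trans a920) one_ne_zero
            · rcases T34 with ⟨a1014, b1014, c1014⟩ | ⟨a1015, b1015, c1015⟩ | ⟨a1016, b1016, c1016⟩
              · exact absurd (a1014.symm.trans a916) one_ne_zero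
              · exact absurd (b1015.symm.trans a2) one_ne_zero
              · rcases T5 with ⟨a1017, b1017, c1017⟩ | ⟨a1018, b1018, c1018⟩ | ⟨a1019, b1019, c1019⟩
                · exact absurd (c1016.symm.trans b1017) one_ne_zero
                · rcases T10 with ⟨a1020, b1020, c1020⟩ | ⟨a1021, b1021, c1021⟩ | ⟨a1022, b1022, c1022⟩
                  · rcases T37 with ⟨a1023, b1023, c1023⟩ | ⟨a1024, b1024, c1024⟩ | ⟨a1025, b1025, c1025⟩
                    · exact absurd (a1023.symm.trans b1020) one_ne_zero
                    · exact absurd (b1024.symm.trans b912) one_ne_zero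
                    · rcases T23 with ⟨a1026, b1026, c1026⟩ | ⟨a1027, b1027, c1027⟩ | ⟨a1028, b1028, c1028⟩
                      · rcases T35 with ⟨a1029, b1029, c1029⟩ | ⟨a1030, b1030, c1030⟩ | ⟨a1031, b1031, c1031⟩
                        · rcases T21 with ⟨a1032, b1032, c1032⟩ | ⟨a1033, b1033, c1033⟩ | ⟨a1034, b1034, c1034⟩
                          · exact absurd (a1029.symm.trans b1032) one_ne_zero
                          · rcases T30 with ⟨a1035, b1035, c1035⟩ | ⟨a1036, b1036, c1036⟩ | ⟨a1037, b1037, c1037⟩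
                            · rcases T18 with ⟨a1038, b1038, c1038⟩ | ⟨a1039, b1039, c1039⟩ | ⟨a1040, b1040, c1040⟩
                              · rcases T4 with ⟨a1041, b1041, c1041⟩ | ⟨a1042, b1042, c1042⟩ | ⟨a1043, b1043, c1043⟩
                                · exact absurd (a1041.symm.trans b1038) one_ne_zero
                                · exact absurd (b1042.symm.trans b909) one_ne_zero
                                · rcases T31 with ⟨a1044, b1044, c1044⟩ | ⟨a1045, b1045, c1045⟩ | ⟨a1046, b1046, c1046⟩
                                  · exact absurd (a1044.symm.trans a916) one_ne_zero
                                  · exact absurd (c1043.symm.trans c1045) one_ne_zero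
                                  · rcases T22 with ⟨a1047, b1047, c1047⟩ | ⟨a1048, b1048, c1048⟩ | ⟨a1049, b1049, c1049⟩
                                    · exact absurd (a1047.symm.trans b1046) one_ne_zero
                                    · exact absurd (b1048.symm.trans b912) one_ne_zero
                                    · rcases T36 with ⟨a1050, b1050, c1050⟩ | ⟨a1051, b1051, c1051⟩ | ⟨a1052, b1052, c1052⟩
                                      · exact absurd (c1049.symm.trans b1050) one_ne_zero
                                      · exact absurd (a1035.symm.trans a1051) one_ne_zero
                                      · exact absurd (a1035.symm.trans a1052) one_ne_zero
                              · exact absurd (a1035.symm.trans a1039) one_ne_zero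
                              · exact absurd (a1035.symm.trans a1040) one_ne_zero
                            · exact absurd (b1036.symm.trans a1033) one_ne_zero
                            · exact absurd (c1037.symm.trans c906) one_ne_zero
                          · exact absurd (a1029.symm.trans b1034) one_ne_zero
                        · exact absurd (b1030.symm.trans b1026) one_ne_zero
                        · exact absurd (c1031.symm.trans b2) one_ne_zero
                      · exact absurd (b916.symm.trans a1027) one_ne_zero
                      · exact absurd (b916.symm.trans a1028) one_ne_zero
                  · exact absurd (b916.symm.trans a1021) one_ne_zero
                  · exact absurd (b916.symm.trans a1022) one_ne_zero
                · exact absurd (c1016.symm.trans b1019) one_ne_zero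
            · exact absurd (c917.symm.trans c906) one_ne_zero
          · exact absurd (a906.symm.trans a913) one_ne_zero
          · exact absurd (a906.symm.trans a914) one_ne_zero
        · exact absurd (a906.symm.trans a910) one_ne_zero
        · exact absurd (a906.symm.trans a911) one_ne_zero
      · exact absurd (b907.symm.trans a638) one_ne_zero
      · rcases T1 with ⟨a1053, b1053, c1053⟩ | ⟨a1054, b1054, c1054⟩ | ⟨a1055, b1055, c1055⟩
        · exact absurd (c908.symm.trans c1053) one_ne_zero
        · exact absurd (c908.symm.trans c1054) one_ne_zero
        · rcases T34 with ⟨a1056, b1056, c1056⟩ | ⟨a1057, b1057, c1057⟩ | ⟨a1058, b1058, c1058⟩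
          · exact absurd (a1056.symm.trans a1055) one_ne_zero
          · exact absurd (b1057.symm.trans a2) one_ne_zero
          · rcases T5 with ⟨a1059, b1059, c1059⟩ | ⟨a1060, b1060, c1060⟩ | ⟨a1061, b1061, c1061⟩
            · exact absurd (c1058.symm.trans b1059) one_ne_zero
            · rcases T20 with ⟨a1062, b1062, c1062⟩ | ⟨a1063, b1063, c1063⟩ | ⟨a1064, b1064, c1064⟩
              · exact absurd (c908.symm.trans c1062) one_ne_zero
              · exact absurd (c908.symm.trans c1063) one_ne_zero
              · rcases T6 with ⟨a1065, b1065, c1065⟩ | ⟨a1066, b1066, c1066⟩ | ⟨a1067, b1067, c1067⟩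
                · exact absurd (a1065.symm.trans a1064) one_ne_zero
                · exact absurd (b1066.symm.trans a1060) one_ne_zero
                · rcases T12 with ⟨a1068, b1068, c1068⟩ | ⟨a1069, b1069, c1069⟩ | ⟨a1070, b1070, c1070⟩
                  · rcases T39 with ⟨a1071, b1071, c1071⟩ | ⟨a1072, b1072, c1072⟩ | ⟨a1073, b1073, c1073⟩
                    · exact absurd (a1071.symm.trans a1055) one_ne_zero
                    · rcases T14 with ⟨a1074, b1074, c1074⟩ | ⟨a1075, b1075, c1075⟩ | ⟨a1076, b1076, c1076⟩
                      · rcases T13 with ⟨a1077, b1077, c1077⟩ | ⟨a1078, b1078, c1078⟩ | ⟨a1079, b1079, c1079⟩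
                        · exact absurd (a1077.symm.trans a638) one_ne_zero
                        · exact absurd (b1078.symm.trans b1074) one_ne_zero
                        · rcases T16 with ⟨a1080, b1080, c1080⟩ | ⟨a1081, b1081, c1081⟩ | ⟨a1082, b1082, c1082⟩
                          · rcases T10 with ⟨a1083, b1083, c1083⟩ | ⟨a1084, b1084, c1084⟩ | ⟨a1085, b1085, c1085⟩
                            · exact absurd (a1083.symm.trans b1055) one_ne_zero
                            · rcases T25 with ⟨a1086, b1086, c1086⟩ | ⟨a1087, b1087, c1087⟩ | ⟨a1088, b1088, c1088⟩
                              · rcases T35 with ⟨a1089, b1089, c1089⟩ | ⟨a1090, b1090, c1090⟩ | ⟨a1091, b1091, c1091⟩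
                                · exact absurd (a1089.symm.trans b1086) one_ne_zero
                                · rcases T23 with ⟨a1092, b1092, c1092⟩ | ⟨a1093, b1093, c1093⟩ | ⟨a1094, b1094, c1094⟩
                                  · exact absurd (a1092.symm.trans b1055) one_ne_zero
                                  · rcases T11 with ⟨a1095, b1095, c1095⟩ | ⟨a1096, b1096, c1096⟩ | ⟨a1097, b1097, c1097⟩
                                    · exact absurd (a1095.symm.trans b1074) one_ne_zero
                                    · exact absurd (b1096.symm.trans c1093) one_ne_zero
                                    · rcases T24 with ⟨a1098, b1098, c1098⟩ | ⟨a1099, b1099, c1099⟩ | ⟨a1100, b1100, c1100⟩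
                                      · exact absurd (a1098.symm.trans a2) one_ne_zero
                                      · rcases T29 with ⟨a1101, b1101, c1101⟩ | ⟨a1102, b1102, c1102⟩ | ⟨a1103, b1103, c1103⟩
                                        · exact absurd (c1097.symm.trans b1101) one_ne_zero
                                        · rcases T21 with ⟨a1104, b1104, c1104⟩ | ⟨a1105, b1105, c1105⟩ | ⟨a1106, b1106, c1106⟩
                                          · exact absurd (a1104.symm.trans a1102) one_ne_zero
                                          · exact absurd (b1105.symm.trans b1086) one_ne_zero
                                          · rcases T30 with ⟨a1107, b1107, c1107⟩ | ⟨a1108, b1108, c1108⟩ | ⟨a1109, b1109, c1109⟩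
                                            · exact absurd (c908.symm.trans c1107) one_ne_zero
                                            · exact absurd (b1108.symm.trans a1102) one_ne_zero
                                            · rcases T32 with ⟨a1110, b1110, c1110⟩ | ⟨a1111, b1111, c1111⟩ | ⟨a1112, b1112, c1112⟩
                                              · rcases T18 with ⟨a1113, b1113, c1113⟩ | ⟨a1114, b1114, c1114⟩ | ⟨a1115, b1115, c1115⟩
                                                · exact absurd (a1113.symm.trans a1109) one_ne_zero
                                                · exact absurd (b1114.symm.trans b1110) one_ne_zero
                                                · rcases T37 with ⟨a1116, b1116, c1116⟩ | ⟨a1117, b1117, c1117⟩ | ⟨a1118, b1118, c1118⟩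
                                                  · rcases T9 with ⟨a1119, b1119, c1119⟩ | ⟨a1120, b1120, c1120⟩ | ⟨a1121, b1121, c1121⟩
                                                    · exact absurd (a1119.symm.trans a908) one_ne_zero
                                                    · exact absurd (b1120.symm.trans b1116) one_ne_zero
                                                    · rcases T38 with ⟨a1122, b1122, c1122⟩ | ⟨a1123, b1123, c1123⟩ | ⟨a1124, b1124, c1124⟩
                                                      · exact absurd (c1058.symm.trans b1122) one_ne_zero
                                                      · rcases T3 with ⟨a1125, b1125, c1125⟩ | ⟨a1126, b1126, c1126⟩ | ⟨a1127, b1127, c1127⟩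
                                                        · exact absurd (a1125.symm.trans b1064) one_ne_zero
                                                        · exact absurd (b1126.symm.trans a1123) one_ne_zero
                                                        · rcases T15 with ⟨a1128, b1128, c1128⟩ | ⟨a1129, b1129, c1129⟩ | ⟨a1130, b1130, c1130⟩
                                                          · exact absurd (a1128.symm.trans a1123) one_ne_zero
                                                          · exact absurd (b1129.symm.trans b1080) one_ne_zero
                                                          · rcases T17 with ⟨a1131, b1131, c1131⟩ | ⟨a1132, b1132, c1132⟩ | ⟨a1133, b1133, c1133⟩
                                                            · rcases T28 with ⟨a1134, b1134, c1134⟩ | ⟨a1135, b1135, c1135⟩ | ⟨a1136, b1136, c1136⟩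
                                                              · rcases T27 with ⟨a1137, b1137, c1137⟩ | ⟨a1138, b1138, c1138⟩ | ⟨a1139, b1139, c1139⟩
                                                                · exact absurd (a1137.symm.trans a1060) one_ne_zero
                                                                · exact absurd (b1138.symm.trans b1134) one_ne_zero
                                                                · rcases T33 with ⟨a1140, b1140, c1140⟩ | ⟨a1141, b1141, c1141⟩ | ⟨a1142, b1142, c1142⟩
                                                                  · exact absurd (a1140.symm.trans b1055) one_ne_zero
                                                                  · rcases T19 with ⟨a1143, b1143, c1143⟩ | ⟨a1144, b1144, c1144⟩ | ⟨a1145, b1145, c1145⟩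
                                                                    · rcases T4 with ⟨a1146, b1146, c1146⟩ | ⟨a1147, b1147, c1147⟩ | ⟨a1148, b1148, c1148⟩
                                                                      · exact absurd (a1146.symm.trans b1110) one_ne_zero
                                                                      · exact absurd (b1147.symm.trans b1143) one_ne_zero
                                                                      · rcases T8 with ⟨a1149, b1149, c1149⟩ | ⟨a1150, b1150, c1150⟩ | ⟨a1151, b1151, c1151⟩
                                                                        · exact absurd (a1149.symm.trans a908) one_ne_zero
                                                                        · exact absurd (b1150.symm.trans b1143) one_ne_zero
                                                                        · rcases T31 with ⟨a1152, b1152, c1152⟩ | ⟨a1153, b1153, c1153⟩ | ⟨a1154, b1154, c1154⟩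
                                                                          · exact absurd (a1152.symm.trans a1055) one_ne_zero
                                                                          · exact absurd (c1148.symm.trans c1153) one_ne_zero
                                                                          · rcases T22 with ⟨a1155, b1155, c1155⟩ | ⟨a1156, b1156, c1156⟩ | ⟨a1157, b1157, c1157⟩
                                                                            · exact absurd (a1155.symm.trans b1154) one_ne_zero
                                                                            · exact absurd (b1156.symm.trans b1116) one_ne_zero
                                                                            · rcases T26 with ⟨a1158, b1158, c1158⟩ | ⟨a1159, b1159, c1159⟩ | ⟨a1160, b1160, c1160⟩
                                                                              · exact absurd (c1157.symm.trans b1158) one_ne_zero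
                                                                              · exact absurd (b1141.symm.trans a1159) one_ne_zero
                                                                              · exact absurd (b1141.symm.trans a1160) one_ne_zero
                                                                    · exact absurd (b1141.symm.trans a1144) one_ne_zero
                                                                    · exact absurd (b1141.symm.trans a1145) one_ne_zero
                                                                  · exact absurd (c1142.symm.trans b1134) one_ne_zero
                                                              · exact absurd (c1127.symm.trans a1135) one_ne_zero
                                                              · exact absurd (c1127.symm.trans a1136) one_ne_zero
                                                            · exact absurd (c1127.symm.trans a1132) one_ne_zero
                                                            · exact absurd (c1127.symm.trans a1133) one_ne_zero
                                                      · exact absurd (c1058.symm.trans b1124) one_ne_zero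
                                                  · exact absurd (b1084.symm.trans a1117) one_ne_zero
                                                  · exact absurd (b1084.symm.trans a1118) one_ne_zero
                                              · exact absurd (b1084.symm.trans a1111) one_ne_zero
                                              · exact absurd (b1084.symm.trans a1112) one_ne_zero
                                        · exact absurd (c1097.symm.trans b1103) one_ne_zero
                                      · exact absurd (c1097.symm.trans b1100) one_ne_zero
                                  · exact absurd (b1090.symm.trans b1094) one_ne_zero
                                · exact absurd (c1091.symm.trans b2) one_ne_zero
                              · exact absurd (b1072.symm.trans a1087) one_ne_zero
                              · exact absurd (b1072.symm.trans a1088) one_ne_zero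
                            · exact absurd (c1085.symm.trans b1080) one_ne_zero
                          · exact absurd (c1067.symm.trans a1081) one_ne_zero
                          · exact absurd (c1067.symm.trans a1082) one_ne_zero
                      · exact absurd (b1072.symm.trans a1075) one_ne_zero
                      · exact absurd (b1072.symm.trans a1076) one_ne_zero
                    · exact absurd (c1073.symm.trans b1068) one_ne_zero
                  · exact absurd (c1067.symm.trans a1069) one_ne_zero
                  · exact absurd (c1067.symm.trans a1070) one_ne_zero
            · exact absurd (c1058.symm.trans b1061) one_ne_zero
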